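/- arXiv:1508.06466 — 11 statements merged into one kernel-verified Lean document; each statement's English description precedes it below -/
import Mathlib

section
/- Let α, β be real numbers with 0 < β < α < b, b ≥ 2 an integer, and suppose (b^k − β)/α is not an integer for every k ≥ 1. For n large enough, ⌊log_b(α(n+1) + β)⌋ − ⌊log_b(αn + β)⌋ = 1 if and only if there exists an integer k ≥ 1 with n = ⌊(b^k − β)/α⌋. -/
/-!
Write `f x = α x + β`. Once `f n ≥ 1`, consecutive values differ by `α < b`, which is too little
for `⌊log_b f⌋` to jump by two; so the difference is `1` exactly when a power `b ^ k` lies in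
`(f n, f (n + 1)]`, i.e. when `n < (b ^ k - β) / α ≤ n + 1`. As `(b ^ k - β) / α` is never an
integer, this says `n = ⌊(b ^ k - β) / α⌋`.
-/

namespace Int

variable {R : Type*} [Semifield R] [LinearOrder R] [IsStrictOrderedRing R] [FloorSemiring R]
  {b : ℕ} {x y : R}

lemma log_nonneg_of_one_le (hb : 1 < b) (hx : 1 ≤ x) : 0 ≤ log b x :=
  (zpow_le_iff_le_log hb (zero_lt_one.trans_le hx)).mp (by rwa [zpow_zero])

lemma log_le_log_add_one_of_lt_add (hb : 2 ≤ b) (hx : 1 ≤ x) (hxy : x ≤ y) (hy : y < x + b) :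
    log b y ≤ log b x + 1 := by
  have hb1 : 1 < b := hb
  have hb0 : (b : R) ≠ 0 := by positivity
  set m := log b x
  have hm : 0 ≤ m := log_nonneg_of_one_le hb1 hx
  have hbm : (b : R) ≤ (b : R) ^ (m + 1) := by
    simpa using zpow_le_zpow_right₀ (by exact_mod_cast hb1.le) (by omega : 1 ≤ m + 1)
  have hy' : y < (b : R) ^ (m + 1 + 1) :=
    calc y < x + b := hy
      _ ≤ (b : R) ^ (m + 1) + (b : R) ^ (m + 1) := add_le_add (lt_zpow_succ_log_self hb1 x).le hbm
      _ = 2 * (b : R) ^ (m + 1) := (two_mul _).symm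
      _ ≤ (b : R) ^ (m + 1) * b := by
        rw [mul_comm]; gcongr; exact_mod_cast hb
      _ = (b : R) ^ (m + 1 + 1) := (zpow_add_one₀ hb0 _).symm
  exact Int.lt_add_one_iff.mp <|
    (lt_zpow_iff_log_lt hb1 (zero_lt_one.trans_le (hx.trans hxy))).mp hy'

lemma log_lt_log_iff_exists_pow (hb : 1 < b) (hx : 1 ≤ x) (hxy : x ≤ y) :
    log b x < log b y ↔ ∃ k : ℕ, 1 ≤ k ∧ x < (b : R) ^ k ∧ (b : R) ^ k ≤ y := by
  have hx0 : 0 < x := zero_lt_one.trans_le hx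
  have hy0 : 0 < y := hx0.trans_le hxy
  constructor
  · intro hlog
    have hm := log_nonneg_of_one_le hb hx
    refine ⟨(log b y).toNat, by omega, ?_⟩
    rw [← zpow_natCast, Int.toNat_of_nonneg (by omega)]
    exact ⟨(lt_zpow_iff_log_lt hb hx0).mpr hlog, zpow_log_le_self hb hy0⟩
  · rintro ⟨k, -, hxk, hky⟩
    rw [← zpow_natCast] at hxk hky
    exact ((lt_zpow_iff_log_lt hb hx0).mp hxk).trans_le ((zpow_le_iff_le_log hb hy0).mp hky)

end Int

lemma Int.eq_floor_iff_lt_and_le_of_ne_intCast {R : Type*} [Ring R] [LinearOrder R]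
    [IsStrictOrderedRing R] [FloorRing R] {t : R} (ht : ∀ m : ℤ, t ≠ m) (n : ℤ) :
    n = ⌊t⌋ ↔ (n : R) < t ∧ t ≤ n + 1 := by
  have hn : t ≠ n := ht n
  have hn1 : t ≠ n + 1 := by exact_mod_cast ht (n + 1)
  rw [eq_comm, Int.floor_eq_iff]
  constructor
  · rintro ⟨h1, h2⟩; exact ⟨h1.lt_of_ne hn.symm, h2.le⟩
  · rintro ⟨h1, h2⟩; exact ⟨h1.le, h2.lt_of_ne hn1⟩

theorem stmt_2 (α β : ℝ) (b : ℕ) (hb : 2 ≤ b) (hβ : 0 < β) (hβα : β < α) (hαb : α < b)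
    (hnotint : ∀ k : ℕ, 1 ≤ k → ∀ m : ℤ, ((b : ℝ) ^ k - β) / α ≠ (m : ℝ)) :
    ∃ N : ℕ, ∀ n ≥ N,
      (⌊Real.logb b (α * (n + 1) + β)⌋ - ⌊Real.logb b (α * n + β)⌋ = 1 ↔
        ∃ k : ℕ, 1 ≤ k ∧ (n : ℤ) = ⌊((b : ℝ) ^ k - β) / α⌋) := by
  have hα : 0 < α := hβ.trans hβα
  refine ⟨⌈α⁻¹⌉₊, fun n hn => ?_⟩
  have hx : 1 ≤ α * n + β := by
    have := (inv_le_iff_one_le_mul₀' hα).mp (Nat.ceil_le.mp hn)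
    linarith
  have hxy : α * n + β ≤ α * (n + 1) + β := by linarith
  have hjump := Int.log_le_log_add_one_of_lt_add hb hx hxy (by linarith)
  have hmono := Int.log_mono_right (b := b) (by linarith) hxy
  have hdiff : Int.log b (α * (n + 1) + β) - Int.log b (α * n + β) = 1 ↔
      Int.log b (α * n + β) < Int.log b (α * (n + 1) + β) := by omega
  rw [Real.floor_logb_natCast (by linarith), Real.floor_logb_natCast (by linarith), hdiff,
    Int.log_lt_log_iff_exists_pow hb hx hxy]
  refine exists_congr fun k => and_congr_right fun hk => ?_
  rw [Int.eq_floor_iff_lt_and_le_of_ne_intCast (hnotint k hk), lt_div_iff₀ hα, div_le_iff₀ hα]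
  push_cast
  constructor <;> rintro ⟨h1, h2⟩ <;> constructor <;> linarith
end

section
/- Let α, β be real numbers with 0 < β < α < b and b ≥ 2 an integer. Define c_k = ⌊(b^k − β)/α⌋ for k ≥ 1 and r_k = ⌊b·{(b^k − β)/α} + (b−1)·{β/α}⌋, where {x} denotes the fractional part. Then c_{k+1} = b·c_k + r_k for all k ≥ 1. -/
/-!
Writing x = (b^k − β)/α, one has (b^{k+1} − β)/α = b·x + (b − 1)·β/α, and β/α is its own
fractional part since 0 < β < α. Splitting b·x = b⌊x⌋ + b{x} pulls the integer b⌊x⌋ out of the floor.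
-/

theorem Int.floor_intCast_mul_add {K : Type*} [Field K] [LinearOrder K] [IsStrictOrderedRing K]
    [FloorRing K] (n : ℤ) (x y : K) :
    ⌊n * x + y⌋ = n * ⌊x⌋ + ⌊n * Int.fract x + y⌋ := by
  have hsplit : n * x + y = ((n * ⌊x⌋ : ℤ) : K) + (n * Int.fract x + y) := by
    conv_lhs => rw [← Int.floor_add_fract x]
    push_cast
    ring
  rw [hsplit, Int.floor_intCast_add]

theorem div_sub_pow_succ_eq {K : Type*} [Field K] (a β b : K) (k : ℕ) :
    (b ^ (k + 1) - β) / a = b * ((b ^ k - β) / a) + (b - 1) * (β / a) := by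
  ring

theorem stmt_3_general (α β : ℝ) (b : ℕ) (hβ : 0 < β) (hβα : β < α)
    (c r : ℕ → ℤ)
    (hc : ∀ k, c k = ⌊((b : ℝ) ^ k - β) / α⌋)
    (hr : ∀ k, r k = ⌊b * Int.fract (((b : ℝ) ^ k - β) / α) + (b - 1) * Int.fract (β / α)⌋) :
    ∀ k : ℕ, 1 ≤ k → c (k + 1) = b * c k + r k := by
  intro k _
  have hα : 0 < α := hβ.trans hβα
  have hfract : Int.fract (β / α) = β / α :=
    Int.fract_eq_self.mpr ⟨(div_pos hβ hα).le, (div_lt_one hα).mpr hβα⟩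
  rw [hc, hc, hr, hfract, div_sub_pow_succ_eq, ← Int.cast_natCast (R := ℝ) b,
    Int.floor_intCast_mul_add]

theorem stmt_3 (α β : ℝ) (b : ℕ) (hb : 2 ≤ b) (hβ : 0 < β) (hβα : β < α) (hαb : α < b)
    (c r : ℕ → ℤ)
    (hc : ∀ k, c k = ⌊((b : ℝ) ^ k - β) / α⌋)
    (hr : ∀ k, r k = ⌊b * Int.fract (((b : ℝ) ^ k - β) / α) + (b - 1) * Int.fract (β / α)⌋) :
    ∀ k : ℕ, 1 ≤ k → c (k + 1) = b * c k + r k :=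
  stmt_3_general α β b hβ hβα c r hc hr
end

section
/- Let α = p/q be rational with p, q positive coprime integers, β real with 0 < β < α < b, and b ≥ 2 an integer. Define r_k = ⌊b·{(b^k − β)/α} + (b−1)·{β/α}⌋. If b^i ≡ b^j (mod p) for positive integers i, j, then r_i = r_j. Consequently, the sequence {r_k}_{k≥1} is ultimately periodic. -/
/-! Shifting `b ^ k` by a multiple `p * c` shifts `(b ^ k - β) / (p / q)` by the integer `c * q`,
so `r k` depends only on the residue of `b ^ k` modulo `p`. Those residues are eventually periodic
by pigeonhole, hence so is `r`. -/

theorem Int.fract_sub_div_eq_of_modEq {p m n : ℕ} (hp : p ≠ 0) (q : ℕ) (β : ℝ)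
    (h : m ≡ n [MOD p]) :
    Int.fract ((m - β) / (p / q)) = Int.fract ((n - β) / (p / q)) := by
  obtain ⟨c, hc⟩ := Nat.modEq_iff_dvd.mp h
  have hc' : (n : ℝ) - m = p * c := by exact_mod_cast hc
  have hp' : (p : ℝ) ≠ 0 := by exact_mod_cast hp
  rw [Int.fract_eq_fract]
  refine ⟨-(c * q), ?_⟩
  rw [← sub_div, sub_sub_sub_cancel_right, ← neg_sub, hc', div_div_eq_mul_div]
  push_cast
  field_simp

theorem Nat.exists_lt_pow_modEq_pow (b : ℕ) {p : ℕ} (hp : p ≠ 0) :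
    ∃ i j, i < j ∧ b ^ i ≡ b ^ j [MOD p] := by
  have : NeZero p := ⟨hp⟩
  obtain ⟨i, j, hne, heq⟩ := Finite.exists_ne_map_eq_of_infinite (fun k : ℕ ↦ ((b ^ k : ℕ) : ZMod p))
  have hmod : b ^ i ≡ b ^ j [MOD p] := (ZMod.natCast_eq_natCast_iff _ _ _).mp heq
  rcases hne.lt_or_gt with hij | hji
  · exact ⟨i, j, hij, hmod⟩
  · exact ⟨j, i, hji, hmod.symm⟩

theorem Nat.eventually_periodic_pow_mod (b : ℕ) {p : ℕ} (hp : p ≠ 0) :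
    ∃ N P, 0 < P ∧ ∀ k ≥ N, b ^ (k + P) ≡ b ^ k [MOD p] := by
  obtain ⟨i, j, hij, hmod⟩ := Nat.exists_lt_pow_modEq_pow b hp
  refine ⟨i, j - i, Nat.sub_pos_of_lt hij, fun k hk ↦ ?_⟩
  obtain ⟨m, rfl⟩ := Nat.exists_eq_add_of_le hk
  have hexp : i + m + (j - i) = j + m := by omega
  rw [hexp, pow_add, pow_add]
  exact hmod.symm.mul_right _

theorem stmt_5_general (p q : ℕ) (hp : 0 < p)
    (α β : ℝ) (b : ℕ) (hα : α = (p : ℝ) / q)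
    (r : ℕ → ℤ)
    (hr : ∀ k, r k = ⌊b * Int.fract (((b : ℝ) ^ k - β) / α) + (b - 1) * Int.fract (β / α)⌋) :
    (∀ i j : ℕ, 1 ≤ i → 1 ≤ j → b ^ i ≡ b ^ j [MOD p] → r i = r j) ∧
      ∃ N P : ℕ, 1 ≤ P ∧ ∀ k ≥ N, r (k + P) = r k := by
  have r_eq_of_modEq : ∀ i j : ℕ, b ^ i ≡ b ^ j [MOD p] → r i = r j := by
    intro i j h
    have hfract := Int.fract_sub_div_eq_of_modEq hp.ne' q β h
    push_cast at hfract
    rw [hr, hr, hα, hfract]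
  obtain ⟨N, P, hP, hper⟩ := Nat.eventually_periodic_pow_mod b hp.ne'
  exact ⟨fun i j _ _ ↦ r_eq_of_modEq i j, N, P, hP, fun k hk ↦ r_eq_of_modEq _ _ (hper k hk)⟩

theorem stmt_5 (p q : ℕ) (hp : 0 < p) (hq : 0 < q) (hpq : Nat.Coprime p q)
    (α β : ℝ) (b : ℕ) (hb : 2 ≤ b) (hα : α = (p : ℝ) / q)
    (hβ : 0 < β) (hβα : β < α) (hαb : α < b)
    (r : ℕ → ℤ)
    (hr : ∀ k, r k = ⌊b * Int.fract (((b : ℝ) ^ k - β) / α) + (b - 1) * Int.fract (β / α)⌋) :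
    (∀ i j : ℕ, 1 ≤ i → 1 ≤ j → b ^ i ≡ b ^ j [MOD p] → r i = r j) ∧
      ∃ N P : ℕ, 1 ≤ P ∧ ∀ k ≥ N, r (k + P) = r k :=
  stmt_5_general p q hp α β b hα r hr
end

section
/- Let α, β ∈ ℝ with 0 < β < α < b, b ≥ 2 an integer, with α irrational. Write 1/α = ⌊1/α⌋ + Σ_{i≥1} α_i/b^i (the base-b digit expansion of the fractional part of 1/α, with digits α_i ∈ {0,…,b−1}), and β/α = Σ_{i≥1} β_i/b^i. For k ≥ 0 let P_k denote the statement Σ_{i≥1} α_{k+i}/b^i ≥ Σ_{i≥1} β_i/b^i. Define r_k = ⌊b·{(b^k−β)/α} + (b−1)·{β/α}⌋. Then for k ≥ 1: r_k = α_{k+1} if P_k and P_{k+1} both hold; r_k = α_{k+1} − 1 if P_k holds and P_{k+1} fails; r_k = b + α_{k+1} if P_k fails and P_{k+1} holds; r_k = b + α_{k+1} − 1 if both P_k and P_{k+1} fail. -/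
/-!
Put `x = b ^ k / α` and `s = β / α ∈ [0, 1)`. Shifting the expansion of `{1/α}` gives
`{x} = 0.α_{k+1} α_{k+2} …` and `{b x} = 0.α_{k+2} …` in base `b` (irrationality of `α` rules out a
tail equal to `1`), so `b {x} = α_{k+1} + {b x}`, and `P_k`, `P_{k+1}` read `s ≤ {x}`, `s ≤ {b x}`.
Now `{x - s} = {x} - s`, plus a borrow of `1` exactly when `P_k` fails, hence
`b {x - s} + (b - 1) s = α_{k+1} + b [¬P_k] + ({b x} - s)`, and `⌊{b x} - s⌋` is `0` or `-1`
according to `P_{k+1}`.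
-/

namespace Int

variable {R : Type*} [CommRing R] [LinearOrder R] [IsStrictOrderedRing R] [FloorRing R]

theorem fract_sub_of_mem_Ico {x s : R} (hs0 : 0 ≤ s) (hs1 : s < 1) :
    fract (x - s) = fract x - s + if s ≤ fract x then 0 else 1 := by
  rw [fract_eq_iff]
  refine ⟨?_, ?_, ⌊x⌋ - if s ≤ fract x then 0 else 1, ?_⟩
  · split_ifs <;> linarith [fract_nonneg x]
  · split_ifs <;> linarith [fract_lt_one x, fract_nonneg x]
  · split_ifs <;> (push_cast; linarith [fract_add_floor x])

theorem floor_fract_sub_of_mem_Ico {y s : R} (hs0 : 0 ≤ s) (hs1 : s < 1) :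
    ⌊fract y - s⌋ = if s ≤ fract y then 0 else -1 := by
  rw [floor_eq_iff]
  split_ifs <;> (push_cast; constructor <;> linarith [fract_lt_one y, fract_nonneg y])

theorem fract_intCast_mul_fract (n : ℤ) (x : R) : fract (n * fract x) = fract (n * x) :=
  fract_eq_fract.mpr ⟨-(n * ⌊x⌋), by push_cast; linear_combination (n : R) * fract_add_floor x⟩

theorem floor_mul_fract_sub_add (n : ℤ) (x : R) {s : R} (hs0 : 0 ≤ s) (hs1 : s < 1) :
    ⌊n * fract (x - s) + (n - 1) * s⌋ =
      ⌊n * fract x⌋ + (if s ≤ fract x then 0 else n) - if s ≤ fract (n * x) then 0 else 1 := by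
  have key : n * fract (x - s) + (n - 1) * s =
      ((⌊n * fract x⌋ + if s ≤ fract x then 0 else n : ℤ) : R) + (fract (n * x) - s) := by
    rw [fract_sub_of_mem_Ico hs0 hs1, ← fract_intCast_mul_fract]
    have := floor_add_fract ((n : R) * fract x)
    split_ifs <;> (push_cast; linear_combination -this)
  rw [key, floor_intCast_add, floor_fract_sub_of_mem_Ico hs0 hs1]
  split_ifs <;> ring

end Int

theorem Irrational.natCast_pow_mul {x : ℝ} (hx : Irrational x) {n : ℕ} (hn : n ≠ 0) (m : ℕ) :
    Irrational ((n : ℝ) ^ m * x) := by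
  exact_mod_cast hx.natCast_mul (pow_ne_zero m hn)

namespace Real

variable {b : ℕ}

theorem tsum_div_pow_eq_ofDigits (d : ℕ → ℕ) (hd : ∀ i, d i < b) :
    ∑' i, (d i : ℝ) / b ^ (i + 1) = ofDigits (fun i => ⟨d i, hd i⟩) := by
  simp only [ofDigits, ofDigitsTerm, div_eq_mul_inv]

theorem mul_ofDigits (a : ℕ → Fin b) :
    b * ofDigits a = (a 0 : ℕ) + ofDigits (fun i => a (i + 1)) := by
  have hb : (b : ℝ) ≠ 0 := by exact_mod_cast (a 0).pos.ne'
  rw [ofDigits_eq_sum_add_ofDigits a 1]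
  simp only [Finset.range_one, Finset.sum_singleton, ofDigitsTerm]
  field_simp
  ring

variable {a : ℕ → Fin b} {x : ℝ}

theorem fract_mul_eq_ofDigits_tail (hx : Irrational (b * x)) (h : Int.fract x = ofDigits a) :
    Int.fract (b * x) = ofDigits (fun i => a (i + 1)) := by
  have hbx : b * x = ((b * ⌊x⌋ + (a 0 : ℕ) : ℤ) : ℝ) + ofDigits (fun i => a (i + 1)) := by
    push_cast
    rw [add_assoc, ← mul_ofDigits, ← h]
    linear_combination (b : ℝ) * (Int.floor_add_fract x).symm
  rw [hbx, Int.fract_intCast_add, Int.fract_eq_self]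
  refine ⟨ofDigits_nonneg _, (ofDigits_le_one _).lt_of_ne fun h1 => ?_⟩
  exact hx.ne_int (b * ⌊x⌋ + (a 0 : ℕ) + 1) (by rw [hbx, h1]; push_cast; ring)

theorem floor_mul_fract_eq_digit (hx : Irrational (b * x)) (h : Int.fract x = ofDigits a) :
    ⌊b * Int.fract x⌋ = (a 0 : ℕ) := by
  rw [h, mul_ofDigits, ← fract_mul_eq_ofDigits_tail hx h, Int.floor_natCast_add, Int.floor_fract,
    add_zero]

theorem fract_pow_mul_eq_ofDigits (hx : Irrational x) (h : Int.fract x = ofDigits a) (m : ℕ) :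
    Int.fract (b ^ m * x) = ofDigits (fun i => a (i + m)) := by
  have hb : b ≠ 0 := (a 0).pos.ne'
  induction m with
  | zero => simpa using h
  | succ m ih =>
    have hirr : Irrational (b * (b ^ m * x)) := by
      rw [← mul_assoc, ← pow_succ']
      exact hx.natCast_pow_mul hb _
    rw [pow_succ', mul_assoc, fract_mul_eq_ofDigits_tail hirr ih]
    simp only [add_right_comm _ 1 m, add_assoc]

theorem floor_mul_fract_pow_mul_eq_digit (hx : Irrational x) (h : Int.fract x = ofDigits a)
    (m : ℕ) : ⌊b * Int.fract (b ^ m * x)⌋ = (a m : ℕ) := by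
  have hirr : Irrational (b * (b ^ m * x)) := by
    rw [← mul_assoc, ← pow_succ']
    exact hx.natCast_pow_mul (a 0).pos.ne' _
  simpa using floor_mul_fract_eq_digit hirr (fract_pow_mul_eq_ofDigits hx h m)

end Real

theorem stmt_6_general (α β : ℝ) (b : ℕ) (hirr : Irrational α)
    (hβ : 0 < β) (hβα : β < α)
    (A B : ℕ → ℕ) (hA : ∀ i, A i < b)
    (hAexp : Int.fract (1 / α) = ∑' i : ℕ, (A (i + 1) : ℝ) / b ^ (i + 1))
    (hBexp : β / α = ∑' i : ℕ, (B (i + 1) : ℝ) / b ^ (i + 1))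
    (P : ℕ → Prop)
    (hP : ∀ k, P k ↔ (∑' i : ℕ, (B (i + 1) : ℝ) / b ^ (i + 1)) ≤
      ∑' i : ℕ, (A (k + i + 1) : ℝ) / b ^ (i + 1))
    (r : ℕ → ℤ)
    (hr : ∀ k, r k = ⌊b * Int.fract (((b : ℝ) ^ k - β) / α) + (b - 1) * Int.fract (β / α)⌋) :
    ∀ k : ℕ, 1 ≤ k →
      (P k → P (k + 1) → r k = A (k + 1)) ∧
      (P k → ¬P (k + 1) → r k = (A (k + 1) : ℤ) - 1) ∧
      (¬P k → P (k + 1) → r k = b + A (k + 1)) ∧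
      (¬P k → ¬P (k + 1) → r k = (b : ℤ) + A (k + 1) - 1) := by
  intro k _
  have hα : 0 < α := hβ.trans hβα
  have hs : β / α ∈ Set.Ico 0 1 := ⟨(div_pos hβ hα).le, (div_lt_one hα).mpr hβα⟩
  let a : ℕ → Fin b := fun i => ⟨A (i + 1), hA _⟩
  have hirr' : Irrational (1 / α) := one_div α ▸ hirr.inv
  have ha : Int.fract (1 / α) = Real.ofDigits a := by
    rw [hAexp, Real.tsum_div_pow_eq_ofDigits _ fun i => hA _]
  have hfract := Real.fract_pow_mul_eq_ofDigits hirr' ha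
  have hPm (m : ℕ) : P m ↔ β / α ≤ Int.fract ((b : ℝ) ^ m * (1 / α)) := by
    rw [hP, ← hBexp, hfract, Real.tsum_div_pow_eq_ofDigits _ fun i => hA _]
    simp only [a, Nat.add_comm m]
  have hrk : r k = A (k + 1) + (if β / α ≤ Int.fract ((b : ℝ) ^ k * (1 / α)) then 0 else (b : ℤ))
      - if β / α ≤ Int.fract ((b : ℝ) ^ (k + 1) * (1 / α)) then 0 else 1 := by
    have := Int.floor_mul_fract_sub_add (b : ℤ) ((b : ℝ) ^ k * (1 / α)) hs.1 hs.2
    push_cast at this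
    rw [hr, Int.fract_eq_self.mpr hs, show ((b : ℝ) ^ k - β) / α = b ^ k * (1 / α) - β / α by ring,
      this, Real.floor_mul_fract_pow_mul_eq_digit hirr' ha k, ← mul_assoc, ← pow_succ']
  simp only [hPm] at hrk ⊢
  refine ⟨fun h1 h2 => ?_, fun h1 h2 => ?_, fun h1 h2 => ?_, fun h1 h2 => ?_⟩ <;>
    simp only [hrk, h1, h2, if_true, if_false] <;> ring

theorem stmt_6 (α β : ℝ) (b : ℕ) (hb : 2 ≤ b) (hirr : Irrational α)
    (hβ : 0 < β) (hβα : β < α) (hαb : α < b)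
    (A B : ℕ → ℕ) (hA : ∀ i, A i < b) (hB : ∀ i, B i < b)
    (hAexp : Int.fract (1 / α) = ∑' i : ℕ, (A (i + 1) : ℝ) / b ^ (i + 1))
    (hBexp : β / α = ∑' i : ℕ, (B (i + 1) : ℝ) / b ^ (i + 1))
    (P : ℕ → Prop)
    (hP : ∀ k, P k ↔ (∑' i : ℕ, (B (i + 1) : ℝ) / b ^ (i + 1)) ≤
      ∑' i : ℕ, (A (k + i + 1) : ℝ) / b ^ (i + 1))
    (r : ℕ → ℤ)
    (hr : ∀ k, r k = ⌊b * Int.fract (((b : ℝ) ^ k - β) / α) + (b - 1) * Int.fract (β / α)⌋) :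
    ∀ k : ℕ, 1 ≤ k →
      (P k → P (k + 1) → r k = A (k + 1)) ∧
      (P k → ¬P (k + 1) → r k = (A (k + 1) : ℤ) - 1) ∧
      (¬P k → P (k + 1) → r k = b + A (k + 1)) ∧
      (¬P k → ¬P (k + 1) → r k = (b : ℤ) + A (k + 1) - 1) :=
  stmt_6_general α β b hirr hβ hβα A B hA hAexp hBexp P hP r hr
end

section
/- With the setup of digit expansions of 1/α and β/α in base b and r_k as defined: r_k ∈ {α_{k+1}, b + α_{k+1}} if and only if r_{k+1} ∈ {α_{k+2}, α_{k+2} − 1}; and r_k ∈ {α_{k+1} − 1, b + α_{k+1} − 1} if and only if r_{k+1} ∈ {b + α_{k+2}, b + α_{k+2} − 1}. -/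
/-!
Put `t_k = fract (b^k / α)`. Since `1/α` is irrational, `t_k` is the shifted expansion
`0.α_{k+1} α_{k+2} …` (a tail of digits `b - 1` would make `b^k / α` an integer), so
`b t_k = α_{k+1} + t_{k+1}`, and `P_k` says `t_k ≥ β/α`. Unfolding the floor then gives
`r_k = α_{k+1} + b [¬P_k] - [¬P_{k+1}]`. Hence `r_k ∈ {α_{k+1}, b + α_{k+1}}` exactly when
`P_{k+1}` holds, and `r_{k+1} ∈ {α_{k+2}, α_{k+2} - 1}` also exactly when `P_{k+1}` holds;
`b ≥ 2` keeps the four possible values of `r_k - α_{k+1}` apart.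
-/

open Real Set

theorem natCast_mul_ofDigits {b : ℕ} (d : ℕ → Fin b) :
    b * ofDigits d = d 0 + ofDigits (fun i ↦ d (i + 1)) := by
  have hb : (b : ℝ) ≠ 0 := by exact_mod_cast (Fin.pos (d 0)).ne'
  rw [ofDigits_eq_sum_add_ofDigits d 1]
  simp only [Finset.range_one, ofDigitsTerm, Finset.sum_singleton, zero_add, pow_one]
  field_simp

theorem fract_pow_mul_eq_ofDigits {x : ℝ} (hx : Irrational x) {b : ℕ} (d : ℕ → Fin b)
    (hd : Int.fract x = ofDigits d) (k : ℕ) :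
    Int.fract (b ^ k * x) = ofDigits (fun i ↦ d (i + k)) := by
  induction k with
  | zero => simpa using hd
  | succ k ih =>
    have hfract :
        Int.fract (b ^ (k + 1) * x) = Int.fract (ofDigits (fun i ↦ d (i + (k + 1)))) := by
      have hmul : (b : ℝ) * ofDigits (fun i ↦ d (i + k))
          = d k + ofDigits (fun i ↦ d (i + (k + 1))) := by
        rw [natCast_mul_ofDigits]
        simp only [zero_add, add_assoc, Nat.add_comm 1 k]
      rw [← ih, ← Int.self_sub_floor] at hmul
      rw [Int.fract_eq_fract]
      exact ⟨b * ⌊b ^ k * x⌋ + d k, by push_cast; linear_combination hmul⟩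
    have hne : ofDigits (fun i ↦ d (i + (k + 1))) ≠ 1 := by
      intro h
      have hb : b ≠ 0 := (Fin.pos (d 0)).ne'
      have hirr : Irrational (b ^ (k + 1) * x) := by
        exact_mod_cast hx.natCast_mul (pow_ne_zero (k + 1) hb)
      rw [h, Int.fract_one] at hfract
      exact Int.fract_ne_zero_iff.2 (fun ⟨m, hm⟩ ↦ hirr.ne_int m hm.symm) hfract
    rw [hfract, Int.fract_eq_self]
    exact ⟨ofDigits_nonneg _, (ofDigits_le_one _).lt_of_ne hne⟩

theorem natCast_mul_fract_pow_mul {x : ℝ} (hx : Irrational x) {b : ℕ} (d : ℕ → Fin b)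
    (hd : Int.fract x = ofDigits d) (k : ℕ) :
    b * Int.fract (b ^ k * x) = d k + Int.fract (b ^ (k + 1) * x) := by
  rw [fract_pow_mul_eq_ofDigits hx d hd, fract_pow_mul_eq_ofDigits hx d hd, natCast_mul_ofDigits]
  simp only [zero_add, add_assoc, Nat.add_comm 1 k]

theorem floor_sub_of_mem_Ico {t y : ℝ} (ht : t ∈ Ico 0 1) (hy : y ∈ Ico 0 1) :
    ⌊t - y⌋ = -(if t < y then 1 else 0) := by
  rw [Int.floor_eq_iff]
  split_ifs <;> push_cast <;> constructor <;> linarith [ht.1, ht.2, hy.1, hy.2]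

theorem floor_mul_fract_sub_add {b a : ℕ} {u t y : ℝ} (ht : t ∈ Ico 0 1) (hy : y ∈ Ico 0 1)
    (hu : b * Int.fract u = a + t) :
    ⌊b * Int.fract (u - y) + (b - 1) * y⌋
      = a + b * (if Int.fract u < y then 1 else 0) - (if t < y then 1 else 0) := by
  have hfract : Int.fract (u - y) = Int.fract u - y - ⌊Int.fract u - y⌋ := by
    rw [Int.self_sub_floor, Int.fract_eq_fract]
    exact ⟨⌊u⌋, by rw [← Int.self_sub_floor u]; ring⟩
  rw [hfract, floor_sub_of_mem_Ico ⟨Int.fract_nonneg u, Int.fract_lt_one u⟩ hy]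
  set e : ℤ := if Int.fract u < y then 1 else 0
  have hsplit : (b : ℝ) * (Int.fract u - y - ((-e : ℤ) : ℝ)) + (b - 1) * y
      = ((a + b * e : ℤ) : ℝ) + (t - y) := by
    push_cast
    linear_combination hu
  rw [hsplit, Int.floor_intCast_add, floor_sub_of_mem_Ico ht hy]
  ring

theorem stmt_8_general (α β : ℝ) (b : ℕ) (hb : 2 ≤ b) (hirr : Irrational α)
    (hβ : 0 < β) (hβα : β < α)
    (A : ℕ → ℕ) (hA : ∀ i, A i < b)
    (hAexp : Int.fract (1 / α) = ∑' i : ℕ, (A (i + 1) : ℝ) / b ^ (i + 1))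
    (r : ℕ → ℤ)
    (hr : ∀ k, r k = ⌊b * Int.fract (((b : ℝ) ^ k - β) / α) + (b - 1) * Int.fract (β / α)⌋) :
    ∀ k : ℕ, 1 ≤ k →
      ((r k = (A (k + 1) : ℤ) ∨ r k = (b : ℤ) + A (k + 1)) ↔
        (r (k + 1) = (A (k + 2) : ℤ) ∨ r (k + 1) = (A (k + 2) : ℤ) - 1)) ∧
      ((r k = (A (k + 1) : ℤ) - 1 ∨ r k = (b : ℤ) + A (k + 1) - 1) ↔
        (r (k + 1) = (b : ℤ) + A (k + 2) ∨ r (k + 1) = (b : ℤ) + A (k + 2) - 1)) := by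
  have hα : 0 < α := hβ.trans hβα
  have hy : β / α ∈ Ico 0 1 := ⟨by positivity, (div_lt_one hα).2 hβα⟩
  let d : ℕ → Fin b := fun i ↦ ⟨A (i + 1), hA (i + 1)⟩
  have hd : Int.fract α⁻¹ = ofDigits d := by
    rw [← one_div, hAexp]
    simp [ofDigits, ofDigitsTerm, d, div_eq_mul_inv]
  have hr_indicators : ∀ k, r k
      = A (k + 1) + b * (if Int.fract (b ^ k * α⁻¹) < β / α then 1 else 0)
        - (if Int.fract (b ^ (k + 1) * α⁻¹) < β / α then 1 else 0) := fun k ↦ by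
    rw [hr k, Int.fract_eq_self.2 hy, div_eq_mul_inv _ α, sub_mul, ← div_eq_mul_inv β]
    exact floor_mul_fract_sub_add ⟨Int.fract_nonneg _, Int.fract_lt_one _⟩ hy
      (natCast_mul_fract_pow_mul hirr.inv d hd k)
  intro k _
  have hrk := hr_indicators k
  have hrk1 := hr_indicators (k + 1)
  simp only [add_assoc, Nat.reduceAdd] at hrk1
  split_ifs at hrk hrk1 <;> omega

theorem stmt_8 (α β : ℝ) (b : ℕ) (hb : 2 ≤ b) (hirr : Irrational α)
    (hβ : 0 < β) (hβα : β < α) (hαb : α < b)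
    (A B : ℕ → ℕ) (hA : ∀ i, A i < b) (hB : ∀ i, B i < b)
    (hAexp : Int.fract (1 / α) = ∑' i : ℕ, (A (i + 1) : ℝ) / b ^ (i + 1))
    (hBexp : β / α = ∑' i : ℕ, (B (i + 1) : ℝ) / b ^ (i + 1))
    (r : ℕ → ℤ)
    (hr : ∀ k, r k = ⌊b * Int.fract (((b : ℝ) ^ k - β) / α) + (b - 1) * Int.fract (β / α)⌋) :
    ∀ k : ℕ, 1 ≤ k →
      ((r k = (A (k + 1) : ℤ) ∨ r k = (b : ℤ) + A (k + 1)) ↔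
        (r (k + 1) = (A (k + 2) : ℤ) ∨ r (k + 1) = (A (k + 2) : ℤ) - 1)) ∧
      ((r k = (A (k + 1) : ℤ) - 1 ∨ r k = (b : ℤ) + A (k + 1) - 1) ↔
        (r (k + 1) = (b : ℤ) + A (k + 2) ∨ r (k + 1) = (b : ℤ) + A (k + 2) - 1)) :=
  stmt_8_general α β b hb hirr hβ hβα A hA hAexp r hr
end

section
/- Let b ≥ 2, B ≥ 2 be integers and u a sequence over {0,…,B−1} with u_0 ≥ 1, and v_n = Σ_{i=0}^n u_i b^{n−i}. If v_N ≥ b^{K−1} and v_N ≤ b^K − 1 and v_{N+1} ≥ b^{K+1}, where K satisfies b^{K+1} − b + B ≤ b^{K+2} − C with C = ⌊(B−1)/(b−1)⌋ + 1, then for all i ≥ 1, b^{K+i} ≤ v_{N+i} ≤ b^{K+i+1} − C. -/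
/-!
Since `v (n + 1) = b * v n + u (n + 1)` with `u (n + 1) ≤ B - 1`, the window
`b ^ m ≤ v n ≤ b ^ (m + 1) - C` is carried from `n` to `n + 1` (with `m + 1`): the lower bound
because multiplying by `b` already suffices, the upper bound because `C` is chosen so that
`B ≤ C * (b - 1)`, i.e. the largest digit never eats up the margin `b * C - C`.
The window for `m = K + 1` is entered at `N + 1`, since `v (N + 1) ≤ b * (b ^ K - 1) + B - 1`,
which the condition on `K` keeps below `b ^ (K + 2) - C`.
-/

open Finset

theorem sum_range_mul_pow_sub_succ (u : ℕ → ℕ) (b n : ℕ) :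
    ∑ i ∈ range (n + 2), u i * b ^ (n + 1 - i) =
      b * ∑ i ∈ range (n + 1), u i * b ^ (n - i) + u (n + 1) := by
  rw [sum_range_succ, Nat.sub_self, pow_zero, mul_one, mul_sum]
  congr 1
  refine sum_congr rfl fun i hi => ?_
  rw [Nat.sub_add_comm (Nat.lt_succ_iff.mp (mem_range.mp hi)), pow_succ]
  ring

theorem le_pred_div_add_one_mul (B d : ℕ) (hd : 0 < d) : B ≤ ((B - 1) / d + 1) * d := by
  have := Nat.lt_div_mul_add (a := B - 1) hd
  rw [add_one_mul]
  omega

theorem mul_add_add_le_mul {b B C x y p : ℕ} (hx : x + C ≤ p) (hy : y < B)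
    (hBC : B ≤ C * (b - 1)) : b * x + y + C ≤ b * p := by
  obtain _ | b := b
  · rw [Nat.zero_sub, mul_zero] at hBC
    omega
  · rw [Nat.add_sub_cancel] at hBC
    calc (b + 1) * x + y + C ≤ (b + 1) * x + C * b + C := by omega
      _ = (b + 1) * (x + C) := by ring
      _ ≤ (b + 1) * p := Nat.mul_le_mul_left _ hx

section Window

variable {b B C : ℕ} {u v : ℕ → ℕ}

theorem window_succ (hrec : ∀ n, v (n + 1) = b * v n + u (n + 1)) (hu : ∀ i, u i < B)
    (hBC : B ≤ C * (b - 1)) {n m : ℕ} (h : b ^ m ≤ v n ∧ v n + C ≤ b ^ (m + 1)) :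
    b ^ (m + 1) ≤ v (n + 1) ∧ v (n + 1) + C ≤ b ^ (m + 1 + 1) := by
  rw [hrec, pow_succ' b m, pow_succ' b (m + 1)]
  exact ⟨(Nat.mul_le_mul_left b h.1).trans (Nat.le_add_right _ _),
    mul_add_add_le_mul h.2 (hu _) hBC⟩

theorem window_add (hrec : ∀ n, v (n + 1) = b * v n + u (n + 1)) (hu : ∀ i, u i < B)
    (hBC : B ≤ C * (b - 1)) {n m : ℕ} (h : b ^ m ≤ v n ∧ v n + C ≤ b ^ (m + 1)) (j : ℕ) :
    b ^ (m + j) ≤ v (n + j) ∧ v (n + j) + C ≤ b ^ (m + j + 1) := by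
  induction j with
  | zero => exact h
  | succ j ih => exact window_succ hrec hu hBC ih

end Window

theorem stmt_11_general (b B : ℕ) (hb : 2 ≤ b)
    (u : ℕ → ℕ) (hu : ∀ i, u i < B)
    (v : ℕ → ℕ) (hv : ∀ n, v n = ∑ i ∈ Finset.range (n + 1), u i * b ^ (n - i))
    (C : ℕ) (hC : C = (B - 1) / (b - 1) + 1)
    (K N : ℕ) (hKC : b ^ (K + 1) - b + B ≤ b ^ (K + 2) - C)
    (h2 : v N ≤ b ^ K - 1) (h3 : b ^ (K + 1) ≤ v (N + 1)) :
    ∀ i : ℕ, 1 ≤ i → b ^ (K + i) ≤ v (N + i) ∧ v (N + i) ≤ b ^ (K + i + 1) - C := by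
  have hrec : ∀ n, v (n + 1) = b * v n + u (n + 1) := fun n => by
    rw [hv, hv, sum_range_mul_pow_sub_succ]
  have hBC : B ≤ C * (b - 1) := hC ▸ le_pred_div_add_one_mul B (b - 1) (by omega)
  have hvN : b * v N + b ≤ b ^ (K + 1) := by
    rw [pow_succ', ← mul_add_one]
    exact Nat.mul_le_mul_left b (by have := Nat.one_le_pow K b (by omega); omega)
  have hbK : b ≤ b ^ (K + 1) := Nat.le_self_pow (by omega) b
  have hstart : v (N + 1) + C ≤ b ^ (K + 2) := by
    have := hu (N + 1)
    rw [hrec]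
    omega
  rintro i hi
  obtain ⟨j, rfl⟩ : ∃ j, i = 1 + j := ⟨i - 1, by omega⟩
  have := window_add hrec hu hBC ⟨h3, hstart⟩ j
  rw [← add_assoc, ← add_assoc]
  omega

theorem stmt_11 (b B : ℕ) (hb : 2 ≤ b) (hB : 2 ≤ B)
    (u : ℕ → ℕ) (hu : ∀ i, u i < B) (hu0 : 1 ≤ u 0)
    (v : ℕ → ℕ) (hv : ∀ n, v n = ∑ i ∈ Finset.range (n + 1), u i * b ^ (n - i))
    (C : ℕ) (hC : C = (B - 1) / (b - 1) + 1)
    (K N : ℕ) (hK : 1 ≤ K) (hKC : b ^ (K + 1) - b + B ≤ b ^ (K + 2) - C)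
    (h1 : b ^ (K - 1) ≤ v N) (h2 : v N ≤ b ^ K - 1) (h3 : b ^ (K + 1) ≤ v (N + 1)) :
    ∀ i : ℕ, 1 ≤ i → b ^ (K + i) ≤ v (N + i) ∧ v (N + i) ≤ b ^ (K + i + 1) - C :=
  stmt_11_general b B hb u hu v hv C hC K N hKC h2 h3
end

section
/- Let b ≥ 2 be an integer and suppose the increasing integer sequence {s_n} satisfies: the base-b digit string of v_{s_n} equals V₀V₁ⁿV₂ for fixed nonempty digit strings V₀, V₁, V₂ (for all n ≥ 0), where v_m = Σ_{i=0}^m u_i b^{m−i}. Then [u_{s_n+1} ⋯ u_{s_{n+1}}]_b = [V₁V₂]_b − b^{|V₁|}·[V₂]_b is constant for all sufficiently large n. -/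
/-!
Appending the block `u_{m+1} ⋯ u_{m+p}` to the expansion `v_m` gives
`v_{m+p} = b^p v_m + [u_{m+1} ⋯ u_{m+p}]_b`, while appending one more copy of `V₁` to the
word `V₀V₁ⁿV₂` multiplies the head `V₀V₁ⁿ` by `b^p` and inserts `V₁` in front of `V₂`.
Comparing the two descriptions of `v_{s_{n+1}}` isolates the block `u_{s_n+1} ⋯ u_{s_{n+1}}`.
-/

open Finset

theorem sum_range_mul_pow_sub_add {R : Type*} [CommSemiring R] (u : ℕ → R) (b : R) (m p : ℕ) :
    ∑ i ∈ range (m + p + 1), u i * b ^ (m + p - i) =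
      b ^ p * ∑ i ∈ range (m + 1), u i * b ^ (m - i) +
        ∑ i ∈ range p, u (m + 1 + i) * b ^ (p - 1 - i) := by
  rw [show m + p + 1 = m + 1 + p by omega, sum_range_add, mul_sum]
  congr 1
  · refine sum_congr rfl fun i hi => ?_
    rw [show m + p - i = p + (m - i) by have := mem_range.mp hi; omega, pow_add]
    ring
  · refine sum_congr rfl fun i hi => ?_
    rw [show m + p - (m + 1 + i) = p - 1 - i by omega]

theorem ofDigits_reverse_append_append_add (b : ℕ) (A B C : List ℕ) :
    Nat.ofDigits b (A ++ B ++ C).reverse + b ^ B.length * Nat.ofDigits b C.reverse =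
      b ^ B.length * Nat.ofDigits b (A ++ C).reverse + Nat.ofDigits b (B ++ C).reverse := by
  simp only [List.reverse_append, Nat.ofDigits_append, List.length_reverse]
  ring

theorem flatten_replicate_succ {α : Type*} (L : List α) (n : ℕ) :
    (List.replicate (n + 1) L).flatten = (List.replicate n L).flatten ++ L := by
  simp [List.replicate_succ']

theorem stmt_12_general (b : ℕ)
    (u : ℕ → ℕ) (v : ℕ → ℕ)
    (hv : ∀ m, v m = ∑ i ∈ Finset.range (m + 1), u i * b ^ (m - i))
    (V₀ V₁ V₂ : List ℕ)
    (p : ℕ) (hp : p = V₁.length)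
    (s : ℕ → ℕ)
    (hstep : ∃ M : ℕ, ∀ n ≥ M, s (n + 1) = s n + p)
    (hword : ∀ n : ℕ,
      v (s n) = Nat.ofDigits b (V₀ ++ (List.replicate n V₁).flatten ++ V₂).reverse) :
    ∃ N : ℕ, ∀ n ≥ N,
      ((∑ i ∈ Finset.range p, u (s n + 1 + i) * b ^ (p - 1 - i) : ℕ) : ℤ) =
        (Nat.ofDigits b (V₁ ++ V₂).reverse : ℤ) -
          (b : ℤ) ^ V₁.length * (Nat.ofDigits b V₂.reverse : ℤ) := by
  obtain ⟨M, hM⟩ := hstep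
  refine ⟨M, fun n hn => ?_⟩
  subst hp
  have hblock : v (s (n + 1)) = b ^ V₁.length * v (s n) +
      ∑ i ∈ range V₁.length, u (s n + 1 + i) * b ^ (V₁.length - 1 - i) := by
    rw [hM n hn, hv, hv, sum_range_mul_pow_sub_add]
  have hnext : v (s (n + 1)) =
      Nat.ofDigits b (V₀ ++ (List.replicate n V₁).flatten ++ V₁ ++ V₂).reverse := by
    rw [hword, flatten_replicate_succ]
    simp only [List.append_assoc]
  have hdigits := ofDigits_reverse_append_append_add b (V₀ ++ (List.replicate n V₁).flatten) V₁ V₂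
  rw [← hnext, ← hword, hblock] at hdigits
  rw [eq_sub_iff_add_eq]
  exact_mod_cast (by linarith : _ = Nat.ofDigits b (V₁ ++ V₂).reverse)

theorem stmt_12 (b : ℕ) (hb : 2 ≤ b)
    (u : ℕ → ℕ) (v : ℕ → ℕ)
    (hv : ∀ m, v m = ∑ i ∈ Finset.range (m + 1), u i * b ^ (m - i))
    (V₀ V₁ V₂ : List ℕ)
    (hV₀ : V₀ ≠ []) (hV₁ : V₁ ≠ []) (hV₂ : V₂ ≠ [])
    (hd₀ : ∀ d ∈ V₀, d < b) (hd₁ : ∀ d ∈ V₁, d < b) (hd₂ : ∀ d ∈ V₂, d < b)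
    (p : ℕ) (hp : p = V₁.length)
    (s : ℕ → ℕ) (hs : StrictMono s)
    (hstep : ∃ M : ℕ, ∀ n ≥ M, s (n + 1) = s n + p)
    (hword : ∀ n : ℕ,
      v (s n) = Nat.ofDigits b (V₀ ++ (List.replicate n V₁).flatten ++ V₂).reverse) :
    ∃ N : ℕ, ∀ n ≥ N,
      ((∑ i ∈ Finset.range p, u (s n + 1 + i) * b ^ (p - 1 - i) : ℕ) : ℤ) =
        (Nat.ofDigits b (V₁ ++ V₂).reverse : ℤ) -
          (b : ℤ) ^ V₁.length * (Nat.ofDigits b V₂.reverse : ℤ) :=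
  stmt_12_general b u v hv V₀ V₁ V₂ p hp s hstep hword
end

section
/- Let b ≥ 2 and B be integers with 2 ≤ B, and let u = {u_i}_{i≥0} be a sequence over {0,…,B−1} with u_0 ≥ 1. If u is ultimately periodic, then the language L_b(u) = { (Σ_{i=0}^n u_i b^{n−i})_b : n ≥ 0 } ⊆ {0,…,b−1}* (base-b digit strings) is a regular language. -/
/-!
For `n₀ ≥ N` the subsequence `x k = v (n₀ + k p)` satisfies `x (k + 1) = b ^ p * x k + a` for a
constant `a`. Writing `a = q (b ^ p - 1) + s` with `1 ≤ s ≤ b ^ p - 1` (or `a = s = q = 0`) gives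
`x (q + j) = R + b ^ (p q) * s * (1 + b ^ p + ⋯ + b ^ (p (j - 1))) + b ^ (p (q + j)) * h` with
`R < b ^ (p q)`: the base-`b` expansion of `x (q + j)` is a fixed block, `j` copies of the `p`-digit
block of `s`, and the digits of a fixed `h ≥ 1`. So up to reversal `L` is a finite language plus
finitely many languages `A V* W`, and these are regular by the Myhill–Nerode theorem.
-/

open Finset
open scoped Computability

theorem List.finite_setOf_isSuffix {α : Type*} (w : List α) : {y | y <:+ w}.Finite := by
  simpa [List.mem_tails] using w.tails.finite_toSet

namespace Language

variable {α : Type*}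

theorem isRegular_of_leftQuotient_mem {L : Language α} {F : Set (Language α)} (hF : F.Finite)
    (hL : L ∈ F) (hstep : ∀ M ∈ F, ∀ a, M.leftQuotient [a] ∈ F) : L.IsRegular := by
  have key : ∀ x, ∀ M ∈ F, M.leftQuotient x ∈ F := by
    intro x
    induction x with
    | nil => exact fun M hM => hM
    | cons a x ih =>
      intro M hM
      rw [← List.singleton_append, leftQuotient_append]
      exact ih _ (hstep M hM a)
  exact .of_finite_range_leftQuotient (hF.subset (Set.range_subset_iff.2 fun x => key x L hL))

theorem IsRegular.of_finite {L : Language α} (hL : Set.Finite (L : Set (List α))) :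
    L.IsRegular := by
  set S : Set (List α) := ⋃ w ∈ (L : Set (List α)), {y | y <:+ w}
  have hS : S.Finite := hL.biUnion fun w _ => w.finite_setOf_isSuffix
  refine isRegular_of_leftQuotient_mem (F := {M | ∀ y ∈ M, y ∈ S}) hS.finite_subsets
    (fun w hw => Set.mem_biUnion hw List.suffix_rfl) ?_
  intro M hM a y hy
  obtain ⟨w, hw, hsuf⟩ := Set.mem_iUnion₂.1 (hM _ hy)
  exact Set.mem_biUnion hw ((List.suffix_cons a y).trans hsuf)

theorem IsRegular.iSup {ι : Type*} [Finite ι] {L : ι → Language α}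
    (h : ∀ i, (L i).IsRegular) : (⨆ i, L i).IsRegular := by
  refine .of_finite_range_leftQuotient
    (((Set.Finite.pi' fun i => (h i).finite_range_leftQuotient).image
      fun f => ⨆ i, f i).subset ?_)
  rintro _ ⟨x, rfl⟩
  refine ⟨fun i => (L i).leftQuotient x, fun i => ⟨x, rfl⟩, ?_⟩
  ext y
  simp [mem_iSup, mem_leftQuotient]

theorem IsRegular.mul {L M : Language α} (hL : L.IsRegular) (hM : M.IsRegular) :
    (L * M).IsRegular := by
  refine .of_finite_range_leftQuotient ((hL.finite_range_leftQuotient.image2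
    (fun A S => A * M + sSup S) hM.finite_range_leftQuotient.finite_subsets).subset ?_)
  rintro _ ⟨x, rfl⟩
  refine ⟨L.leftQuotient x, ⟨x, rfl⟩, M.leftQuotient '' {c | ∃ l ∈ L, x = l ++ c},
    Set.image_subset_range _ _, ?_⟩
  ext y
  simp only [mem_leftQuotient, mem_add, mem_mul, sSup_image, mem_iSup, Set.mem_ofPred_eq]
  constructor
  · rintro (⟨l, hl, m, hm, rfl⟩ | ⟨c, ⟨l, hl, rfl⟩, hc⟩)
    · exact ⟨x ++ l, hl, m, hm, List.append_assoc _ _ _⟩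
    · exact ⟨l, hl, c ++ y, hc, (List.append_assoc _ _ _).symm⟩
  · rintro ⟨l, hl, m, hm, hlm⟩
    rcases List.append_eq_append_iff.1 hlm with ⟨c, rfl, rfl⟩ | ⟨c, rfl, rfl⟩
    · exact Or.inr ⟨c, ⟨l, hl, rfl⟩, hm⟩
    · exact Or.inl ⟨c, hl, m, hm, rfl⟩

theorem leftQuotient_add (L M : Language α) (x : List α) :
    (L + M).leftQuotient x = L.leftQuotient x + M.leftQuotient x :=
  rfl

theorem one_leftQuotient_cons (a : α) : (1 : Language α).leftQuotient [a] = 0 := by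
  ext y
  simp [mem_leftQuotient, mem_one, notMem_zero]

theorem mem_singleton_mul {w y : List α} {M : Language α} :
    y ∈ {w} * M ↔ ∃ m ∈ M, w ++ m = y := by
  simp only [mem_mul]
  exact ⟨fun ⟨_, rfl, m, hm, h⟩ => ⟨m, hm, h⟩, fun ⟨m, hm, h⟩ => ⟨w, rfl, m, hm, h⟩⟩

theorem singleton_cons_mul_leftQuotient [DecidableEq α] (a c : α) (d : List α) (M : Language α) :
    ({c :: d} * M).leftQuotient [a] = if a = c then {d} * M else 0 := by
  ext y
  split_ifs with h
  · subst h
    simp [mem_leftQuotient, mem_singleton_mul]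
  · simp [mem_leftQuotient, mem_singleton_mul, notMem_zero, Ne.symm h]

theorem isRegular_kstar_singleton (V : List α) : (({V} : Language α)∗).IsRegular := by
  classical
  set F : Set (Language α) := insert 0 ((fun d => {d} * ({V} : Language α)∗) '' {d | d <:+ V})
  have hcons : ∀ c d, c :: d <:+ V → ∀ a,
      ({c :: d} * ({V} : Language α)∗).leftQuotient [a] ∈ F := by
    intro c d hd a
    rw [singleton_cons_mul_leftQuotient]
    split_ifs
    · exact Or.inr ⟨d, (List.suffix_cons c d).trans hd, rfl⟩
    · exact Or.inl rfl
  refine isRegular_of_leftQuotient_mem (F := F) ((V.finite_setOf_isSuffix.image _).insert 0)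
    (Or.inr ⟨[], List.nil_suffix, one_mul (({V} : Language α)∗)⟩) ?_
  rintro _ (rfl | ⟨_ | ⟨c, d⟩, hd, rfl⟩) a
  · exact Or.inl rfl
  · change (1 * ({V} : Language α)∗).leftQuotient [a] ∈ F
    rw [one_mul, ← one_add_self_mul_kstar_eq_kstar, leftQuotient_add, one_leftQuotient_cons,
      zero_add]
    rcases V with _ | ⟨c, d⟩
    · change (1 * (1 : Language α)∗).leftQuotient [a] ∈ F
      rw [one_mul, kstar_one, one_leftQuotient_cons]
      exact Or.inl rfl
    · exact hcons c d List.suffix_rfl a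
  · exact hcons c d hd a

theorem mem_kstar_singleton {V x : List α} :
    x ∈ ({V} : Language α)∗ ↔ ∃ j, (List.replicate j V).flatten = x := by
  rw [mem_kstar]
  constructor
  · rintro ⟨Ls, rfl, hLs⟩
    exact ⟨Ls.length, congrArg List.flatten (List.eq_replicate_iff.2 ⟨rfl, hLs⟩).symm⟩
  · rintro ⟨j, rfl⟩
    exact ⟨_, rfl, fun y hy => List.eq_of_mem_replicate hy⟩

theorem isRegular_range_of_pumped {f : ℕ → List α} (k₀ : ℕ) (A V W : List α)
    (hf : ∀ j, f (k₀ + j) = A ++ (List.replicate j V).flatten ++ W) :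
    IsRegular (Set.range f) := by
  have hpumped : ({A} * ({V} : Language α)∗ * {W} : Language α) = Set.range (f <| k₀ + ·) := by
    ext w
    symm
    constructor
    · rintro ⟨j, rfl⟩
      change f (k₀ + j) ∈ ({A} * ({V} : Language α)∗ * {W} : Language α)
      rw [hf]
      exact append_mem_mul (append_mem_mul rfl (mem_kstar_singleton.2 ⟨j, rfl⟩)) rfl
    · intro hw
      obtain ⟨_, hx, _, rfl, rfl⟩ := mem_mul.1 hw
      obtain ⟨_, rfl, _, hv, rfl⟩ := mem_mul.1 hx
      obtain ⟨j, rfl⟩ := mem_kstar_singleton.1 hv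
      exact ⟨j, hf j⟩
  have hsplit : Set.range f = f '' Set.Iio k₀ ∪ Set.range (f <| k₀ + ·) := by
    ext w
    simp only [Set.mem_range, Set.mem_union, Set.mem_image, Set.mem_Iio]
    constructor
    · rintro ⟨k, rfl⟩
      rcases lt_or_ge k k₀ with hk | hk
      · exact Or.inl ⟨k, hk, rfl⟩
      · exact Or.inr ⟨k - k₀, by rw [Nat.add_sub_cancel' hk]⟩
    · rintro (⟨k, -, rfl⟩ | ⟨j, rfl⟩) <;> exact ⟨_, rfl⟩
  rw [hsplit, ← hpumped]
  exact (IsRegular.of_finite ((Set.finite_Iio k₀).image f)).add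
    (((IsRegular.of_finite (Set.finite_singleton A)).mul (isRegular_kstar_singleton V)).mul
      (IsRegular.of_finite (Set.finite_singleton W)))

end Language

-- The paper's `v_n`.
def prefixValue (b : ℕ) (u : ℕ → ℕ) (n : ℕ) : ℕ := ∑ i ∈ range (n + 1), u i * b ^ (n - i)

theorem prefixValue_add (b : ℕ) (u : ℕ → ℕ) (n m : ℕ) :
    prefixValue b u (n + m) =
      b ^ m * prefixValue b u n + ∑ j ∈ range m, u (n + 1 + j) * b ^ (m - 1 - j) := by
  unfold prefixValue
  rw [show n + m + 1 = n + 1 + m by omega, sum_range_add, mul_sum]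
  congr 1
  · refine sum_congr rfl fun i hi => ?_
    rw [show n + m - i = m + (n - i) by have := mem_range.1 hi; omega, pow_add]
    ring
  · refine sum_congr rfl fun j _ => ?_
    rw [show n + m - (n + 1 + j) = m - 1 - j by omega]

theorem prefixValue_pos {b : ℕ} {u : ℕ → ℕ} (hb : 0 < b) (hu0 : 0 < u 0) (n : ℕ) :
    0 < prefixValue b u n :=
  (Nat.mul_pos hu0 (pow_pos hb n)).trans_le
    (single_le_sum (f := fun i => u i * b ^ (n - i)) (fun _ _ => Nat.zero_le _)
      (mem_range.2 n.succ_pos))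

theorem apply_add_mul_of_eventually_periodic {u : ℕ → ℕ} {N p : ℕ} (hper : ∀ n ≥ N, u (n + p) = u n)
    {n : ℕ} (hn : N ≤ n) (k : ℕ) : u (n + k * p) = u n := by
  induction k with
  | zero => simp
  | succ k ih => rw [Nat.succ_mul, ← add_assoc, hper _ (by omega), ih]

theorem prefixValue_add_succ_mul {b N p : ℕ} {u : ℕ → ℕ} (hper : ∀ n ≥ N, u (n + p) = u n)
    {n₀ : ℕ} (hn₀ : N ≤ n₀) (k : ℕ) :
    prefixValue b u (n₀ + (k + 1) * p) =
      b ^ p * prefixValue b u (n₀ + k * p) + ∑ j ∈ range p, u (n₀ + 1 + j) * b ^ (p - 1 - j) := by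
  rw [show n₀ + (k + 1) * p = n₀ + k * p + p by ring, prefixValue_add]
  congr 1
  refine sum_congr rfl fun j _ => ?_
  rw [show n₀ + k * p + 1 + j = n₀ + 1 + j + k * p by ring,
    apply_add_mul_of_eventually_periodic hper (by omega)]

theorem eq_pow_mul_add_mul_geom_sum_of_rec {P a : ℕ} {x : ℕ → ℕ} (hx : ∀ k, x (k + 1) = P * x k + a)
    (k : ℕ) : x k = P ^ k * x 0 + a * ∑ i ∈ range k, P ^ i := by
  induction k with
  | zero => simp
  | succ k ih => rw [hx, ih, geom_sum_succ]; ring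

theorem exists_eq_add_pow_mul_of_rec {P a : ℕ} {x : ℕ → ℕ} (hP : 2 ≤ P)
    (hx : ∀ k, x (k + 1) = P * x k + a) :
    ∃ k₀ R s h, x 0 ≤ h ∧ R < P ^ k₀ ∧ s < P ∧ x k₀ = R + P ^ k₀ * h ∧
      P * R + a = R + s * P ^ k₀ := by
  obtain ⟨Q, rfl⟩ : ∃ Q, P = Q + 1 := ⟨P - 1, by omega⟩
  -- `a = q Q + s` with `1 ≤ s ≤ Q`, or `a = q = s = 0`.
  obtain ⟨q, s, ha, hsQ, hq⟩ : ∃ q s, a = q * Q + s ∧ s ≤ Q ∧ q ≤ s * q := by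
    rcases Nat.eq_zero_or_pos a with rfl | ha
    · exact ⟨0, 0, by simp, Nat.zero_le _, le_rfl⟩
    · refine ⟨(a - 1) / Q, (a - 1) % Q + 1, ?_, Nat.mod_lt _ (by omega),
        Nat.le_mul_of_pos_left _ (by omega)⟩
      have := Nat.div_add_mod (a - 1) Q
      rw [mul_comm] at this
      omega
  have hxq := eq_pow_mul_add_mul_geom_sum_of_rec hx q
  set G := ∑ i ∈ range q, (Q + 1) ^ i
  have hG : G * Q + 1 = (Q + 1) ^ q := geom_sum_mul_add Q q
  have hqG : q ≤ G :=
    calc q = ∑ _i ∈ range q, 1 := by simp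
      _ ≤ G := sum_le_sum fun i _ => Nat.one_le_pow _ _ (by omega)
  have hR : q ≤ s * G := hq.trans (Nat.mul_le_mul_left s hqG)
  refine ⟨q, s * G - q, s, x 0 + q, by omega, ?_, by omega, ?_, ?_⟩
  · calc s * G - q ≤ s * G := Nat.sub_le _ _
      _ ≤ Q * G := Nat.mul_le_mul_right G hsQ
      _ < (Q + 1) ^ q := by rw [← hG, mul_comm]; exact Nat.lt_succ_self _
  · zify [hR] at hxq hG ⊢
    rw [ha] at hxq
    push_cast at hxq
    linear_combination hxq + q * hG
  · zify [hR] at hG ⊢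
    rw [ha]
    push_cast
    linear_combination s * hG

theorem eq_ofDigits_pumped_of_rec {b a k₀ : ℕ} {x : ℕ → ℕ} {W V H : List ℕ}
    (hx : ∀ k, x (k + 1) = b ^ V.length * x k + a)
    (hWV : b ^ V.length * Nat.ofDigits b W + a =
      Nat.ofDigits b W + Nat.ofDigits b V * b ^ W.length)
    (hk₀ : x k₀ = Nat.ofDigits b (W ++ H)) (j : ℕ) :
    x (k₀ + j) = Nat.ofDigits b (W ++ (List.replicate j V).flatten ++ H) := by
  -- By `hWV`, the step `y ↦ b ^ V.length * y + a` turns `W ++ T` into `W ++ V ++ T`.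
  induction j with
  | zero => simpa using hk₀
  | succ j ih =>
    rw [← add_assoc, hx, ih]
    simp only [List.replicate_succ, List.flatten_cons, List.append_assoc, Nat.ofDigits_append]
    linear_combination hWV

theorem Nat.digits_ofDigits_append_digits {b h : ℕ} (hb : 1 < b) {L : List ℕ} (hL : ∀ d ∈ L, d < b)
    (hh : h ≠ 0) : Nat.digits b (Nat.ofDigits b (L ++ Nat.digits b h)) = L ++ Nat.digits b h := by
  refine Nat.digits_ofDigits b hb _ (fun d hd => ?_) fun _ => ?_
  · rcases List.mem_append.1 hd with hd | hd
    · exact hL d hd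
    · exact Nat.digits_lt_base hb hd
  · rw [List.getLast_append_of_right_ne_nil _ _ (Nat.digits_ne_nil_iff_ne_zero.2 hh)]
    exact Nat.getLast_digit_ne_zero b hh

theorem exists_digits_prefixValue_pumped {b N p : ℕ} {u : ℕ → ℕ} (hb : 2 ≤ b) (hp : 1 ≤ p)
    (hu0 : 1 ≤ u 0) (hper : ∀ n ≥ N, u (n + p) = u n) {n₀ : ℕ} (hn₀ : N ≤ n₀) :
    ∃ k₀ W V H, ∀ j, Nat.digits b (prefixValue b u (n₀ + (k₀ + j) * p)) =
      W ++ (List.replicate j V).flatten ++ H := by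
  set x : ℕ → ℕ := fun k => prefixValue b u (n₀ + k * p)
  have hx := prefixValue_add_succ_mul (b := b) hper hn₀
  obtain ⟨k₀, R, s, h, hh, hR, hs, hxk₀, hRs⟩ :=
    exists_eq_add_pow_mul_of_rec (x := x) ((Nat.le_self_pow (by omega) b).trans' hb) hx
  have hPk : (b ^ p) ^ k₀ = b ^ (k₀ * p) := by rw [← pow_mul, mul_comm]
  rw [hPk] at hR hxk₀ hRs
  obtain ⟨W, ⟨hWlen, hWb⟩, rfl⟩ := (Nat.bijOn_ofDigits (by omega) (k₀ * p)).surjOn hR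
  obtain ⟨V, ⟨rfl, hVb⟩, rfl⟩ := (Nat.bijOn_ofDigits (by omega) p).surjOn hs
  have hh0 : h ≠ 0 :=
    ((prefixValue_pos (b := b) (by omega) hu0 n₀).trans_le (by simpa [x] using hh)).ne'
  refine ⟨k₀, W, V, Nat.digits b h, fun j => ?_⟩
  have hxj := eq_ofDigits_pumped_of_rec (x := x) (H := Nat.digits b h) hx (by rwa [hWlen])
    (by rw [hxk₀, Nat.ofDigits_append, hWlen, Nat.ofDigits_digits]) j
  rw [show prefixValue b u (n₀ + (k₀ + j) * V.length) = x (k₀ + j) from rfl, hxj,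
    Nat.digits_ofDigits_append_digits (by omega) ?_ hh0]
  intro d hd
  simp only [List.mem_append, List.mem_flatten, List.mem_replicate] at hd
  rcases hd with hd | ⟨_, ⟨-, rfl⟩, hd⟩
  · exact hWb d hd
  · exact hVb d hd

theorem range_eq_image_Iio_union_iUnion_range {β : Type*} (f : ℕ → β) (N : ℕ) {p : ℕ}
    (hp : 0 < p) :
    Set.range f = f '' Set.Iio N ∪ ⋃ r : Fin p, Set.range fun k => f (N + r + k * p) := by
  ext w
  constructor
  · rintro ⟨n, rfl⟩
    rcases lt_or_ge n N with hn | hn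
    · exact Or.inl ⟨n, hn, rfl⟩
    · refine Or.inr (Set.mem_iUnion.2 ⟨⟨(n - N) % p, Nat.mod_lt _ hp⟩, (n - N) / p, ?_⟩)
      have := Nat.mod_add_div' (n - N) p
      simp only
      congr 1
      omega
  · rintro (⟨n, -, rfl⟩ | hw)
    · exact ⟨n, rfl⟩
    · obtain ⟨r, k, rfl⟩ := Set.mem_iUnion.1 hw
      exact ⟨_, rfl⟩

theorem stmt_13_general (b : ℕ) (hb : 2 ≤ b)
    (u : ℕ → ℕ) (hu0 : 1 ≤ u 0)
    (hper : ∃ N p : ℕ, 1 ≤ p ∧ ∀ n ≥ N, u (n + p) = u n)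
    (L : Language ℕ)
    (hL : L = {w : List ℕ | ∃ n : ℕ,
      w = (Nat.digits b (∑ i ∈ Finset.range (n + 1), u i * b ^ (n - i))).reverse}) :
    L.IsRegular := by
  obtain ⟨N, p, hp, hper⟩ := hper
  set f : ℕ → List ℕ := fun n => Nat.digits b (prefixValue b u n)
  -- `Nat.digits` lists the least significant digit first.
  have hLf : L = Language.reverse (Set.range f) := by
    subst hL
    ext w
    change (∃ n, w = (f n).reverse) ↔ ∃ n, f n = w.reverse
    exact exists_congr fun n => by rw [eq_comm, List.reverse_eq_iff]
  rw [hLf, range_eq_image_Iio_union_iUnion_range f N hp]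
  refine Language.IsRegular.reverse
    ((Language.IsRegular.of_finite ((Set.finite_Iio N).image f)).add
      (Language.IsRegular.iSup fun r => ?_))
  obtain ⟨k₀, W, V, H, hpumped⟩ :=
    exists_digits_prefixValue_pumped hb hp hu0 hper (Nat.le_add_right N r)
  exact Language.isRegular_range_of_pumped k₀ W V H hpumped

theorem stmt_13 (b B : ℕ) (hb : 2 ≤ b) (hB : 2 ≤ B)
    (u : ℕ → ℕ) (hu : ∀ i, u i < B) (hu0 : 1 ≤ u 0)
    (hper : ∃ N p : ℕ, 1 ≤ p ∧ ∀ n ≥ N, u (n + p) = u n)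
    (L : Language ℕ)
    (hL : L = {w : List ℕ | ∃ n : ℕ,
      w = (Nat.digits b (∑ i ∈ Finset.range (n + 1), u i * b ^ (n - i))).reverse}) :
    L.IsRegular :=
  stmt_13_general b hb u hu0 hper L hL
end

section
/- Let b ≥ 2, B ≥ 2 be integers and u a sequence over {0,…,B−1} with u_0 ≥ 1. If the language L_b(u) = { (Σ_{i=0}^n u_i b^{n−i})_b : n ≥ 0 } is regular, then u is ultimately periodic. -/
/-!
Write `v_n` for the values, so that `v_{n+1} = b v_n + u_{n+1}` and `v_{j+t} + B ≤ (v_j + B) b^t`.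
For fixed `j` the leading part `v_m / b^(m-j)` is nondecreasing and bounded in `m`, hence
eventually equal to some `A_j`: the word of `v_m` eventually starts with the word `P_j` of `A_j`.
A regular language has finitely many left quotients, so `P_j` and `P_{j+p}` have the same one for
some `p ≥ 1`. Replacing the prefix `P_j` of the word of `v_m` by `P_{j+p}` therefore gives a word
of the language, of the same length as the word of `v_{m+p}`; since word lengths strictly increase
with `n`, it is the word of `v_{m+p}`. Hence `v_{m+p} - v_m = (A_{j+p} - A_j) b^(m-j)` for large
`m`, and comparing this at `m` and `m + 1` through the recurrence gives `u_{m+1+p} = u_{m+1}`.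
-/

open Filter

theorem Nat.exists_eventually_eq_of_monotone {f : ℕ → ℕ} (hf : Monotone f) {C : ℕ}
    (hC : ∀ n, f n ≤ C) : ∃ A, ∀ᶠ n in atTop, f n = A :=
  ⟨_, tendsto_pure.mp <| by
    simpa only [nhds_discrete] using
      tendsto_atTop_ciSup hf ⟨C, by rintro _ ⟨n, rfl⟩; exact hC n⟩⟩

theorem Nat.digits_div_pow {b : ℕ} (hb : 1 < b) (n k : ℕ) :
    Nat.digits b (n / b ^ k) = (Nat.digits b n).drop k := by
  induction k with
  | zero => simp
  | succ k ih =>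
    rw [pow_succ, ← Nat.div_div_eq_div_mul, ← List.tail_drop, ← ih]
    rcases Nat.eq_zero_or_pos (n / b ^ k) with h | h
    · simp [h]
    · simp [Nat.digits_def' hb h]

theorem Nat.exists_reverse_digits_eq_append {b n k : ℕ} (hb : 1 < b) (h : 0 < n / b ^ k) :
    ∃ s : List ℕ, s.length = k ∧
      (Nat.digits b n).reverse = (Nat.digits b (n / b ^ k)).reverse ++ s := by
  have hdrop := Nat.digits_div_pow hb n k
  have hk : k ≤ (Nat.digits b n).length := by
    by_contra! hlt
    rw [List.drop_of_length_le hlt.le, Nat.digits_eq_nil_iff_eq_zero] at hdrop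
    omega
  refine ⟨((Nat.digits b n).take k).reverse, by simp [hk], ?_⟩
  rw [hdrop, ← List.reverse_append, List.take_append_drop]

theorem Nat.eq_ofDigits_add_of_reverse_digits_eq_append {b n a : ℕ} {s : List ℕ}
    (h : (Nat.digits b n).reverse = (Nat.digits b a).reverse ++ s) :
    n = Nat.ofDigits b s.reverse + b ^ s.length * a := by
  have := congrArg (fun w => Nat.ofDigits b w.reverse) h
  simpa [Nat.ofDigits_append, Nat.ofDigits_digits] using this

def digitLanguage (b : ℕ) (f : ℕ → ℕ) : Language ℕ :=
  {w | ∃ n, w = (Nat.digits b (f n)).reverse}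

theorem eventually_add_pow_mul_eq_of_leftQuotient_eq {b : ℕ} (hb : 1 < b) {f : ℕ → ℕ}
    (hf : StrictMono fun n => (Nat.digits b (f n)).length) {j p A A' : ℕ} (hA : 0 < A)
    (hA' : 0 < A') (h : ∀ᶠ m in atTop, f m / b ^ (m - j) = A)
    (h' : ∀ᶠ m in atTop, f m / b ^ (m - (j + p)) = A')
    (hq : (digitLanguage b f).leftQuotient (Nat.digits b A).reverse =
      (digitLanguage b f).leftQuotient (Nat.digits b A').reverse) :
    ∀ᶠ m in atTop, f (m + p) + b ^ (m - j) * A = f m + b ^ (m - j) * A' := by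
  filter_upwards [h, (tendsto_add_atTop_nat p).eventually h'] with m hm hmp
  rw [Nat.add_sub_add_right] at hmp
  obtain ⟨s, hs, hsplit⟩ := Nat.exists_reverse_digits_eq_append hb (hm ▸ hA)
  obtain ⟨s', hs', hsplit'⟩ := Nat.exists_reverse_digits_eq_append hb (hmp ▸ hA')
  rw [hm] at hsplit
  rw [hmp] at hsplit'
  have hmem : s ∈ (digitLanguage b f).leftQuotient (Nat.digits b A').reverse := by
    rw [← hq]
    exact ⟨m, hsplit.symm⟩
  obtain ⟨m', hm'⟩ := hmem
  have hm'p : m' = m + p := hf.injective <| by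
    have h1 := congrArg List.length hm'
    have h2 := congrArg List.length hsplit'
    simp only [List.length_append, List.length_reverse] at h1 h2
    omega
  subst hm'p
  rw [Nat.eq_ofDigits_add_of_reverse_digits_eq_append hsplit,
    Nat.eq_ofDigits_add_of_reverse_digits_eq_append hm'.symm, hs]
  ring

/-- The paper's `v_n`. -/
def hornerValue (b : ℕ) (u : ℕ → ℕ) (n : ℕ) : ℕ :=
  ∑ i ∈ Finset.range (n + 1), u i * b ^ (n - i)

section HornerValue

variable {b : ℕ} {u : ℕ → ℕ}

theorem hornerValue_zero : hornerValue b u 0 = u 0 := by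
  simp [hornerValue]

theorem hornerValue_succ (n : ℕ) :
    hornerValue b u (n + 1) = b * hornerValue b u n + u (n + 1) := by
  rw [hornerValue, Finset.sum_range_succ, Nat.sub_self, pow_zero, mul_one, hornerValue,
    Finset.mul_sum]
  congr 1
  refine Finset.sum_congr rfl fun i hi => ?_
  rw [Nat.sub_add_comm (Finset.mem_range_succ_iff.mp hi), pow_succ]
  ring

theorem hornerValue_pos (hb : 0 < b) (hu0 : 0 < u 0) (n : ℕ) : 0 < hornerValue b u n := by
  induction n with
  | zero => rwa [hornerValue_zero]
  | succ n ih => rw [hornerValue_succ]; positivity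

theorem strictMono_length_digits_hornerValue (hb : 1 < b) (hu0 : 0 < u 0) :
    StrictMono fun n => (Nat.digits b (hornerValue b u n)).length :=
  strictMono_nat_of_lt_succ fun n => by
    have h := Nat.le_length_digits_le b _ _
      (Nat.le.intro (hornerValue_succ (b := b) (u := u) n).symm)
    rwa [Nat.digits_base_mul hb (hornerValue_pos (by omega) hu0 n), List.length_cons] at h

theorem hornerValue_add_add_le (hb : 2 ≤ b) {B : ℕ} (hu : ∀ i, u i < B) (j t : ℕ) :
    hornerValue b u (j + t) + B ≤ (hornerValue b u j + B) * b ^ t := by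
  induction t with
  | zero => simp
  | succ t ih =>
    rw [← add_assoc, hornerValue_succ, pow_succ, ← mul_assoc]
    have := hu (j + t + 1)
    nlinarith

theorem exists_eventually_hornerValue_div_pow_eq (hb : 2 ≤ b) {B : ℕ} (hu : ∀ i, u i < B)
    (j : ℕ) :
    ∃ A, hornerValue b u j ≤ A ∧ ∀ᶠ m in atTop, hornerValue b u m / b ^ (m - j) = A := by
  set g : ℕ → ℕ := fun t => hornerValue b u (j + t) / b ^ t
  have hg : Monotone g := monotone_nat_of_le_succ fun t => by
    calc g t = b * hornerValue b u (j + t) / b ^ (t + 1) := by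
            rw [pow_succ', Nat.mul_div_mul_left _ _ (by omega)]
      _ ≤ g (t + 1) := Nat.div_le_div_right (by rw [← add_assoc, hornerValue_succ]; omega)
  have hg_le (t : ℕ) : g t ≤ hornerValue b u j + B :=
    Nat.div_le_of_le_mul <| by
      rw [mul_comm]
      exact (Nat.le_add_right _ _).trans (hornerValue_add_add_le hb hu j t)
  obtain ⟨A, hA⟩ := Nat.exists_eventually_eq_of_monotone hg hg_le
  obtain ⟨T, hT⟩ := hA.exists_forall_of_atTop
  refine ⟨A, ?_, ?_⟩
  · simpa [g, hT T le_rfl] using hg (Nat.zero_le T)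
  · filter_upwards [(tendsto_sub_atTop_nat j).eventually hA, eventually_ge_atTop j] with m hm hjm
    simpa [g, Nat.add_sub_cancel' hjm] using hm

theorem eventually_periodic_of_hornerValue_add_eq {p j A A' : ℕ}
    (h : ∀ᶠ m in atTop, hornerValue b u (m + p) + b ^ (m - j) * A =
      hornerValue b u m + b ^ (m - j) * A') :
    ∀ᶠ n in atTop, u (n + p) = u n := by
  filter_upwards [(tendsto_sub_atTop_nat 1).eventually h, h, eventually_ge_atTop (j + 1)]
    with n hprev hn hjn
  obtain ⟨m, rfl⟩ : ∃ m, n = m + 1 := ⟨n - 1, by omega⟩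
  rw [Nat.add_sub_cancel] at hprev
  rw [add_right_comm, hornerValue_succ, hornerValue_succ, Nat.sub_add_comm (by omega),
    pow_succ] at hn
  rw [add_right_comm]
  have := congrArg (b * ·) hprev
  simp only [mul_add] at this
  linarith

end HornerValue

theorem stmt_14_general (b B : ℕ) (hb : 2 ≤ b)
    (u : ℕ → ℕ) (hu : ∀ i, u i < B) (hu0 : 1 ≤ u 0)
    (L : Language ℕ)
    (hL : L = {w : List ℕ | ∃ n : ℕ,
      w = (Nat.digits b (∑ i ∈ Finset.range (n + 1), u i * b ^ (n - i))).reverse})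
    (hreg : L.IsRegular) :
    ∃ N p : ℕ, 1 ≤ p ∧ ∀ n ≥ N, u (n + p) = u n := by
  change L = digitLanguage b (hornerValue b u) at hL
  subst hL
  choose A hA hstab using exists_eventually_hornerValue_div_pow_eq hb hu
  have hApos (j : ℕ) : 0 < A j := (hornerValue_pos (by omega) hu0 j).trans_le (hA j)
  obtain ⟨j, j', hjj', hq⟩ := hreg.finite_range_leftQuotient.exists_lt_map_eq_of_forall_mem
    (f := fun j => (digitLanguage b (hornerValue b u)).leftQuotient (Nat.digits b (A j)).reverse)
    (fun j => Set.mem_range_self _)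
  obtain ⟨p, rfl⟩ := Nat.exists_eq_add_of_le hjj'.le
  have hshift := eventually_add_pow_mul_eq_of_leftQuotient_eq hb
    (strictMono_length_digits_hornerValue hb hu0) (hApos j) (hApos (j + p)) (hstab j)
    (hstab (j + p)) hq
  obtain ⟨N, hN⟩ := (eventually_periodic_of_hornerValue_add_eq hshift).exists_forall_of_atTop
  exact ⟨N, p, by omega, hN⟩

theorem stmt_14 (b B : ℕ) (hb : 2 ≤ b) (hB : 2 ≤ B)
    (u : ℕ → ℕ) (hu : ∀ i, u i < B) (hu0 : 1 ≤ u 0)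
    (L : Language ℕ)
    (hL : L = {w : List ℕ | ∃ n : ℕ,
      w = (Nat.digits b (∑ i ∈ Finset.range (n + 1), u i * b ^ (n - i))).reverse})
    (hreg : L.IsRegular) :
    ∃ N p : ℕ, 1 ≤ p ∧ ∀ n ≥ N, u (n + p) = u n :=
  stmt_14_general b B hb u hu hu0 L hL hreg
end

section
/- Let u be the fixed point of the substitution A ↦ AB, B ↦ BA (Thue–Morse) read as a sequence over blocks A = 10 and B = 02, i.e., u = 1002021002101002⋯. Then u is not ultimately periodic, and hence the language L₂(u) = { binary representation of Σ_{i=0}^n u_i 2^{n−i} : n ≥ 0 } is not regular. -/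
/-
The Thue–Morse word `t n = (digit sum of n) mod 2` is not ultimately periodic: an even period `2q`
restricts to the period `q` via `t (2n) = t n`, while an odd period together with
`t (2n+1) = 1 - t n` forces `t` to be eventually constant, which `t (2^k) = 1 ≠ 0 = t (3·2^k)`
refutes. A period `p` of `u` gives the period `2p`, and hence the period `p` of `t`.

For the language: with `a m = 4 + 4² + ⋯ + 4^m`, one has `v (2m) = a m + [t m = 0]` and
`v (2m+1) = 2 a m + 2`; as `a m` is even, the word `(10)^m 1`, which is the binary expansion of
`a m + 1`, lies in `L₂(u)` exactly when `t m = 0`. If `L₂(u)` were regular, Myhill–Nerode would give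
`N < M` with the same left quotient by `(10)^N` and `(10)^M`, making `t` periodic from `N` on.
-/

open Finset

def thueMorse (n : ℕ) : ℕ := (Nat.digits 2 n).sum % 2

lemma thueMorse_le_one (n : ℕ) : thueMorse n ≤ 1 := Nat.le_of_lt_succ (Nat.mod_lt _ two_pos)

lemma thueMorse_two_mul (n : ℕ) : thueMorse (2 * n) = thueMorse n := by
  rcases n.eq_zero_or_pos with rfl | hn
  · rfl
  · simp [thueMorse, Nat.digits_def' one_lt_two (by omega : 0 < 2 * n)]

lemma thueMorse_two_mul_add_one (n : ℕ) : thueMorse (2 * n + 1) = 1 - thueMorse n := by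
  have h := Nat.digits_add 2 one_lt_two 1 n one_lt_two (Or.inl one_ne_zero)
  unfold thueMorse
  rw [add_comm, h, List.sum_cons]
  omega

lemma thueMorse_two_pow (k : ℕ) : thueMorse (2 ^ k) = 1 := by
  induction k with
  | zero => rfl
  | succ k ih => rw [pow_succ', thueMorse_two_mul, ih]

lemma thueMorse_three_mul_two_pow (k : ℕ) : thueMorse (3 * 2 ^ k) = 0 := by
  induction k with
  | zero => rfl
  | succ k ih => rw [pow_succ', mul_left_comm, thueMorse_two_mul, ih]

lemma thueMorse_not_eventually_const (N : ℕ) : ¬ ∀ n ≥ N, thueMorse (n + 1) = thueMorse n := by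
  intro h
  have hconst : ∀ n ≥ N, thueMorse n = thueMorse N := fun n hn => by
    induction n, hn using Nat.le_induction with
    | base => rfl
    | succ n hn ih => rw [h n hn, ih]
  have hN : N ≤ 2 ^ N := N.lt_two_pow_self.le
  have h1 := hconst _ hN
  have h2 := hconst (3 * 2 ^ N) (by omega)
  rw [thueMorse_two_pow] at h1
  rw [thueMorse_three_mul_two_pow] at h2
  omega

theorem thueMorse_not_eventually_periodic (N p : ℕ) (hp : 0 < p) :
    ¬ ∀ n ≥ N, thueMorse (n + p) = thueMorse n := by
  induction p using Nat.strong_induction_on generalizing N with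
  | _ p ih =>
  intro h
  obtain ⟨q, rfl | rfl⟩ := p.even_or_odd'
  · refine ih q (by omega) N (by omega) fun n hn => ?_
    have h2n := h (2 * n) (by omega)
    rwa [← mul_add, thueMorse_two_mul, thueMorse_two_mul] at h2n
  · refine thueMorse_not_eventually_const N fun m hm => ?_
    have h0 := h (2 * m) (by omega)
    have h1 := h (2 * m + 1) (by omega)
    have h2 := h (2 * (m + 1)) (by omega)
    rw [show 2 * m + (2 * q + 1) = 2 * (m + q) + 1 by ring, thueMorse_two_mul_add_one,
      thueMorse_two_mul] at h0
    rw [show 2 * m + 1 + (2 * q + 1) = 2 * (m + q + 1) by ring, thueMorse_two_mul,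
      thueMorse_two_mul_add_one] at h1
    rw [show 2 * (m + 1) + (2 * q + 1) = 2 * (m + q + 1) + 1 by ring, thueMorse_two_mul_add_one,
      thueMorse_two_mul] at h2
    have := thueMorse_le_one m
    have := thueMorse_le_one (m + q + 1)
    omega

theorem Language.IsRegular.eventually_periodic_mem_flatten_replicate_append {α : Type*}
    {L : Language α} (hL : L.IsRegular) (x z : List α) :
    ∃ N p, 0 < p ∧ ∀ n ≥ N,
      ((List.replicate (n + p) x).flatten ++ z ∈ L ↔ (List.replicate n x).flatten ++ z ∈ L) := by
  obtain ⟨N, M, hlt, hquot⟩ := Set.Finite.exists_lt_map_eq_of_forall_mem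
    (f := fun n => L.leftQuotient (List.replicate n x).flatten) (fun n => Set.mem_range_self _)
    hL.finite_range_leftQuotient
  refine ⟨N, M - N, by omega, fun n hn => ?_⟩
  obtain ⟨k, rfl⟩ := Nat.exists_eq_add_of_le hn
  have hsplit : ∀ m, (List.replicate (m + k) x).flatten ++ z
      = (List.replicate m x).flatten ++ ((List.replicate k x).flatten ++ z) := fun m => by
    simp only [List.replicate_add, List.flatten_append, List.append_assoc]
  rw [show N + k + (M - N) = M + k by omega, hsplit, hsplit]
  change _ ∈ L.leftQuotient _ ↔ _ ∈ L.leftQuotient _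
  rw [hquot]

def binaryValue (u : ℕ → ℕ) (n : ℕ) : ℕ := ∑ i ∈ range (n + 1), u i * 2 ^ (n - i)

lemma binaryValue_zero (u : ℕ → ℕ) : binaryValue u 0 = u 0 := by
  simp [binaryValue]

lemma binaryValue_succ (u : ℕ → ℕ) (n : ℕ) :
    binaryValue u (n + 1) = 2 * binaryValue u n + u (n + 1) := by
  rw [binaryValue, sum_range_succ, binaryValue, mul_sum, Nat.sub_self, pow_zero, mul_one]
  congr 1
  refine sum_congr rfl fun i hi => ?_
  rw [Nat.sub_add_comm (mem_range_succ_iff.mp hi), pow_succ]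
  ring

def sumFourPow : ℕ → ℕ
  | 0 => 0
  | m + 1 => 4 * sumFourPow m + 4

lemma sumFourPow_mod_two (m : ℕ) : sumFourPow m % 2 = 0 := by
  cases m with
  | zero => rfl
  | succ m => simp only [sumFourPow]; omega

lemma strictMono_sumFourPow : StrictMono sumFourPow :=
  strictMono_nat_of_lt_succ fun m => by simp only [sumFourPow]; omega

lemma digits_sumFourPow_add_one (m : ℕ) :
    Nat.digits 2 (sumFourPow m + 1) = 1 :: (List.replicate m [0, 1]).flatten := by
  induction m with
  | zero => simp [sumFourPow]
  | succ m ih =>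
    rw [show sumFourPow (m + 1) + 1 = 1 + 2 * (0 + 2 * (sumFourPow m + 1)) by
        simp only [sumFourPow]; ring,
      Nat.digits_add 2 one_lt_two _ _ one_lt_two (Or.inl one_ne_zero),
      Nat.digits_add 2 one_lt_two _ _ two_pos (Or.inr (by omega)), ih]
    simp [List.replicate_succ]

lemma reverse_flatten_replicate_append_one (m : ℕ) :
    ((List.replicate m [1, 0]).flatten ++ [1]).reverse = Nat.digits 2 (sumFourPow m + 1) := by
  rw [digits_sumFourPow_add_one]
  simp [List.reverse_flatten]

section BlockSequence

variable {u : ℕ → ℕ} (hu₀ : ∀ n, u (2 * n) = if thueMorse n = 0 then 1 else 0)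
  (hu₁ : ∀ n, u (2 * n + 1) = if thueMorse n = 0 then 0 else 2)
include hu₀

lemma thueMorse_eq_of_apply_two_mul_eq {a b : ℕ} (h : u (2 * a) = u (2 * b)) :
    thueMorse a = thueMorse b := by
  have := thueMorse_le_one a
  have := thueMorse_le_one b
  rw [hu₀, hu₀] at h
  split_ifs at h <;> omega

include hu₁

/-- Both blocks `10` and `02` have binary value `2`, so the odd-indexed values do not depend on
the Thue–Morse word. -/
lemma binaryValue_blocks (m : ℕ) :
    binaryValue u (2 * m) = sumFourPow m + (if thueMorse m = 0 then 1 else 0) ∧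
      binaryValue u (2 * m + 1) = 2 * sumFourPow m + 2 := by
  have hodd : ∀ m, binaryValue u (2 * m) = sumFourPow m + (if thueMorse m = 0 then 1 else 0) →
      binaryValue u (2 * m + 1) = 2 * sumFourPow m + 2 := fun m h => by
    rw [binaryValue_succ, h, hu₁]
    split_ifs <;> ring
  induction m with
  | zero =>
    have h : binaryValue u 0 = sumFourPow 0 + (if thueMorse 0 = 0 then 1 else 0) := by
      simpa [binaryValue_zero, sumFourPow] using hu₀ 0
    exact ⟨h, hodd 0 h⟩
  | succ m ih =>
    have h : binaryValue u (2 * (m + 1)) =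
        sumFourPow (m + 1) + (if thueMorse (m + 1) = 0 then 1 else 0) := by
      rw [mul_add, mul_one, binaryValue_succ, ih.2, show 2 * m + 1 + 1 = 2 * (m + 1) by ring,
        hu₀ (m + 1)]
      simp only [sumFourPow]
      ring
    exact ⟨h, hodd _ h⟩

lemma exists_binaryValue_eq_sumFourPow_add_one_iff (m : ℕ) :
    (∃ n, binaryValue u n = sumFourPow m + 1) ↔ thueMorse m = 0 := by
  refine ⟨fun ⟨n, hn⟩ => ?_, fun h => ⟨2 * m, by simp [(binaryValue_blocks hu₀ hu₁ m).1, h]⟩⟩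
  have hm := sumFourPow_mod_two m
  obtain ⟨k, rfl | rfl⟩ := n.even_or_odd'
  · rw [(binaryValue_blocks hu₀ hu₁ k).1] at hn
    split_ifs at hn with hk0
    · rwa [← strictMono_sumFourPow.injective (Nat.add_right_cancel hn)]
    · have := sumFourPow_mod_two k
      omega
  · rw [(binaryValue_blocks hu₀ hu₁ k).2] at hn
    omega

lemma flatten_replicate_append_one_mem_iff {L : Language ℕ}
    (hL : L = {w | ∃ n, w = (Nat.digits 2 (binaryValue u n)).reverse}) (m : ℕ) :
    (List.replicate m [1, 0]).flatten ++ [1] ∈ L ↔ thueMorse m = 0 := by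
  rw [hL, ← exists_binaryValue_eq_sumFourPow_add_one_iff hu₀ hu₁]
  refine exists_congr fun n => ?_
  rw [← List.reverse_inj, List.reverse_reverse, reverse_flatten_replicate_append_one, eq_comm,
    Nat.digits_inj_iff]

end BlockSequence

/-- The Thue–Morse block sequence over {0,1,2}: the Thue–Morse sequence over {A,B}
(A at position n iff the binary digit sum of n is even) with A replaced by the
block 10 and B by the block 02. -/
theorem stmt_15 (u : ℕ → ℕ)
    (hu : ∀ n : ℕ,
      (u (2 * n) = if (Nat.digits 2 n).sum % 2 = 0 then 1 else 0) ∧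
      (u (2 * n + 1) = if (Nat.digits 2 n).sum % 2 = 0 then 0 else 2))
    (L : Language ℕ)
    (hL : L = {w : List ℕ | ∃ n : ℕ,
      w = (Nat.digits 2 (∑ i ∈ Finset.range (n + 1), u i * 2 ^ (n - i))).reverse}) :
    (¬ ∃ N p : ℕ, 1 ≤ p ∧ ∀ n ≥ N, u (n + p) = u n) ∧ ¬ L.IsRegular := by
  have hu₀ : ∀ n, u (2 * n) = if thueMorse n = 0 then 1 else 0 := fun n => (hu n).1
  have hu₁ : ∀ n, u (2 * n + 1) = if thueMorse n = 0 then 0 else 2 := fun n => (hu n).2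
  constructor
  · rintro ⟨N, p, hp, h⟩
    refine thueMorse_not_eventually_periodic N p hp fun n hn => ?_
    refine thueMorse_eq_of_apply_two_mul_eq hu₀ ?_
    calc u (2 * (n + p)) = u (2 * n + p + p) := by ring_nf
      _ = u (2 * n) := by rw [h _ (by omega), h _ (by omega)]
  · intro hreg
    obtain ⟨N, p, hp, h⟩ := hreg.eventually_periodic_mem_flatten_replicate_append [1, 0] [1]
    refine thueMorse_not_eventually_periodic N p hp fun n hn => ?_
    have hn' := h n hn
    rw [flatten_replicate_append_one_mem_iff hu₀ hu₁ hL,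
      flatten_replicate_append_one_mem_iff hu₀ hu₁ hL] at hn'
    have := thueMorse_le_one n
    have := thueMorse_le_one (n + p)
    omega
end

section
/- Let α, β ∈ ℝ and b ≥ 2 an integer. If α is rational, then the sequence u_n = ⌊log_b(αn + β)⌋ is b-regular. -/
/-!
Write `α = p / q` with `p q : ℕ`. Since `α (bⁱ n + j) + β = bⁱ (α n + γ)` with
`γ = (α j + β) / bⁱ`, the subsequence `n ↦ u (bⁱ n + j)` is `i + ⌊log_b (α n + γ)⌋`.
Once `α n ≥ 1` this equals `Nat.log b ((p n + ⌊q γ⌋₊) / q)`, which depends on `γ` only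
through the integer `⌊q γ⌋₊ ≤ ⌊p + q β⌋₊`. So every subsequence of the `b`-kernel agrees,
from a fixed index on, with an element of a finitely generated module; the finitely many
initial terms are absorbed by unit sequences, and `ℤ` is Noetherian.
-/

open Real Submodule

theorem Pi.eq_sum_single_of_eq_zero {R : Type*} [Semiring R] {f : ℕ → R} {N : ℕ}
    (hf : ∀ n, N ≤ n → f n = 0) : f = ∑ m ∈ Finset.range N, f m • Pi.single m 1 := by
  funext n
  simp only [Finset.sum_apply, Pi.smul_apply, Pi.single_apply, smul_eq_mul, mul_ite, mul_one,
    mul_zero, Finset.sum_ite_eq, Finset.mem_range]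
  split_ifs with hn
  · rfl
  · exact hf n (not_lt.mp hn)

theorem Submodule.fg_span_of_eventually_mem {R : Type*} [Ring R] [IsNoetherianRing R]
    {S : Set (ℕ → R)} {P : Submodule R (ℕ → R)} (hP : P.FG) (N : ℕ)
    (h : ∀ s ∈ S, ∃ g ∈ P, ∀ n, N ≤ n → s n = g n) : (span R S).FG := by
  set D := span R ((fun m => Pi.single m 1) '' Set.Iio N : Set (ℕ → R))
  have hDfg : D.FG := fg_span ((Set.finite_Iio N).image _)
  refine (hP.sup hDfg).of_le (span_le.mpr fun s hs => ?_)
  obtain ⟨g, hg, hsg⟩ := h s hs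
  have hD : s - g ∈ D := by
    rw [Pi.eq_sum_single_of_eq_zero (f := s - g) fun n hn => sub_eq_zero.mpr (hsg n hn)]
    exact sum_mem fun m hm => smul_mem _ _
      (subset_span ⟨m, Finset.mem_range.mp hm, rfl⟩)
  simpa using add_mem_sup hg hD

theorem Real.exists_nat_div_eq_of_rat {α : ℝ} (hα : ∃ r : ℚ, α = r) (h0 : 0 ≤ α) :
    ∃ p q : ℕ, 0 < q ∧ α = p / q := by
  obtain ⟨r, rfl⟩ := hα
  lift r to ℚ≥0 using Rat.cast_nonneg.mp h0
  exact ⟨r.num, r.den, r.den_pos, by rw [Rat.cast_nnratCast, NNRat.cast_def]⟩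

theorem Real.floor_logb_pow_mul {b : ℝ} (hb : 1 < b) {y : ℝ} (hy : y ≠ 0) (i : ℕ) :
    ⌊logb b (b ^ i * y)⌋ = i + ⌊logb b y⌋ := by
  rw [logb_mul (pow_ne_zero i (by linarith)) hy, logb_pow, logb_self_eq_one hb, mul_one,
    Int.floor_natCast_add]

theorem Nat.floor_div_mul_add {p q : ℕ} (hq : 0 < q) (n : ℕ) {γ : ℝ} (hγ : 0 ≤ γ) :
    ⌊(p / q : ℝ) * n + γ⌋₊ = (p * n + ⌊q * γ⌋₊) / q := by
  have hq' : (q : ℝ) ≠ 0 := by positivity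
  have : (p / q : ℝ) * n + γ = (q * γ + (p * n : ℕ)) / q := by
    push_cast; field_simp; ring
  rw [this, Nat.floor_div_natCast, Nat.floor_add_natCast (by positivity), add_comm]

theorem Real.floor_logb_div_mul_add {b p q : ℕ} (hq : 0 < q) (n : ℕ) {γ : ℝ} (hγ : 0 ≤ γ)
    (h1 : 1 ≤ (p / q : ℝ) * n + γ) :
    ⌊logb b ((p / q : ℝ) * n + γ)⌋ = Nat.log b ((p * n + ⌊q * γ⌋₊) / q) := by
  rw [floor_logb_natCast (by linarith), Int.log_of_one_le_right _ h1,
    Nat.floor_div_mul_add hq n hγ]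

theorem Real.floor_logb_mul_pow_add {b p q : ℕ} (hb : 1 < b) (hq : 0 < q) {β : ℝ} (i : ℕ)
    {j n : ℕ} (hj : 0 ≤ (p / q : ℝ) * j + β) (hn : 1 ≤ (p / q : ℝ) * n) :
    ⌊logb b ((p / q : ℝ) * (b ^ i * n + j : ℕ) + β)⌋ =
      i + Nat.log b ((p * n + ⌊(p * j + q * β) / b ^ i⌋₊) / q) := by
  set γ := ((p / q : ℝ) * j + β) / b ^ i
  have hγ : 0 ≤ γ := by positivity
  have hsplit :
      (p / q : ℝ) * (b ^ i * n + j : ℕ) + β = (b : ℝ) ^ i * ((p / q : ℝ) * n + γ) := by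
    simp only [γ]; push_cast; field_simp; ring
  have hqγ : (q : ℝ) * γ = (p * j + q * β) / b ^ i := by
    simp only [γ]; field_simp
  rw [hsplit, floor_logb_pow_mul (Nat.one_lt_cast.mpr hb) (by positivity),
    floor_logb_div_mul_add hq n hγ (by linarith), hqγ]

theorem mul_add_div_le_add {p j m : ℕ} (hj : j < m) {c : ℝ} (hc : 0 ≤ c) :
    (p * j + c) / m ≤ p + c := by
  have hm : (1 : ℝ) ≤ m := by exact_mod_cast hj.pos
  have hjm : (j : ℝ) ≤ m := by exact_mod_cast hj.le
  rw [div_le_iff₀ (by linarith)]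
  nlinarith [mul_le_mul_of_nonneg_left hjm (Nat.cast_nonneg p : (0 : ℝ) ≤ p)]

theorem stmt_16 (α β : ℝ) (b : ℕ) (hb : 2 ≤ b)
    (hα : ∃ q : ℚ, α = (q : ℝ)) (hαpos : 0 < α) (hpos : ∀ n : ℕ, 0 < α * n + β)
    (u : ℕ → ℤ) (hu : ∀ n, u n = ⌊Real.logb b (α * n + β)⌋) :
    (Submodule.span ℤ {g : ℕ → ℤ | ∃ i j : ℕ, j < b ^ i ∧
      g = fun n => u (b ^ i * n + j)}).FG := by
  obtain ⟨p, q, hq, rfl⟩ := exists_nat_div_eq_of_rat hα hαpos.le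
  obtain ⟨N, hN⟩ : ∃ N : ℕ, 1 ≤ (p / q : ℝ) * N := by
    obtain ⟨N, hN⟩ := exists_nat_ge (p / q : ℝ)⁻¹
    exact ⟨N, by rwa [← div_le_iff₀' hαpos, one_div]⟩
  have hβ : 0 ≤ β := by simpa using (hpos 0).le
  set W : ℕ → ℕ → ℤ := fun e n => Nat.log b ((p * n + e) / q)
  set E := ⌊p + q * β⌋₊
  have hP : (span ℤ (insert 1 (W '' Set.Iic E))).FG :=
    fg_span (((Set.finite_Iic E).image W).insert 1)
  refine fg_span_of_eventually_mem hP N ?_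
  rintro _ ⟨i, j, hj, rfl⟩
  have he : ⌊(p * j + q * β) / b ^ i⌋₊ ≤ E :=
    Nat.floor_mono (by exact_mod_cast mul_add_div_le_add hj (by positivity))
  refine ⟨(i : ℤ) • 1 + W ⌊(p * j + q * β) / b ^ i⌋₊,
    add_mem (smul_mem _ _ (subset_span (Set.mem_insert _ _)))
      (subset_span (Set.mem_insert_of_mem _ ⟨_, he, rfl⟩)), fun n hn => ?_⟩
  have hαn : 1 ≤ (p / q : ℝ) * n := hN.trans (by gcongr)
  simpa [hu, W] using floor_logb_mul_pow_add hb hq i (hpos j).le hαn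
end
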